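/- arXiv:2007.15642 — 9 statements merged into one kernel-verified Lean document; each statement's English description precedes it below -/
import Mathlib

section
/- Let C be a well-formed funnel CRN and x a nonnegative solution of ODE(C) on [0,∞) from an initial state x⁰ ≥ 0. Then for every species j the concentration x_j(t) converges to a finite limit x*_j as t → ∞. -/
open Filter Topology MeasureTheory

/-- A chemical reaction over `n` species: reactant and product stoichiometry
and a rate function. -/
structure Reaction (n : ℕ) where
  R : Fin n → ℕ
  P : Fin n → ℕ
  f : (Fin n → ℝ) → ℝ

/-- A chemical reaction network: a finite list of reactions. -/
abbrev CRN (n : ℕ) := List (Reaction n)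

/-- Partial derivative of `f` with respect to the `j`-th coordinate at `x`. -/
noncomputable def partialDeriv {n : ℕ} (f : (Fin n → ℝ) → ℝ) (j : Fin n)
    (x : Fin n → ℝ) : ℝ :=
  deriv (fun y => f (Function.update x j y)) (x j)

/-- A reaction is well-formed if its rate is nonnegative and partially
differentiable, a species is a reactant iff the rate depends positively on it
somewhere in the nonnegative orthant, and the rate vanishes iff some reactant
is absent. -/
def WellFormedReaction {n : ℕ} (r : Reaction n) : Prop :=
  (∀ x, 0 ≤ r.f x) ∧
  (∀ (j : Fin n) (x : Fin n → ℝ),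
      DifferentiableAt ℝ (fun y => r.f (Function.update x j y)) (x j)) ∧
  (∀ j : Fin n, 0 < r.R j ↔
      ∃ x : Fin n → ℝ, (∀ k, 0 ≤ x k) ∧ 0 < partialDeriv r.f j x) ∧
  (∀ x : Fin n → ℝ, (∀ k, 0 ≤ x k) → (r.f x = 0 ↔ ∃ j, 0 < r.R j ∧ x j = 0))

def WellFormed {n : ℕ} (C : CRN n) : Prop := ∀ r ∈ C, WellFormedReaction r

/-- Right-hand side of the ODE system associated with a CRN. -/
noncomputable def odeRHS {n : ℕ} (C : CRN n) (y : Fin n → ℝ) (j : Fin n) : ℝ :=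
  ∑ i : Fin C.length, (((C.get i).P j : ℝ) - ((C.get i).R j : ℝ)) * (C.get i).f y

/-- A solution of ODE(C) on `[0,∞)`. -/
def IsSolution {n : ℕ} (C : CRN n) (x : ℝ → Fin n → ℝ) : Prop :=
  ∀ t : ℝ, 0 ≤ t → ∀ j : Fin n, HasDerivAt (fun s => x s j) (odeRHS C (x t) j) t

/-- Nonnegativity of a trajectory on `[0,∞)`. -/
def NonnegSol {n : ℕ} (x : ℝ → Fin n → ℝ) : Prop :=
  ∀ t : ℝ, 0 ≤ t → ∀ j, 0 ≤ x t j

/-- A steady state of ODE(C). -/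
def SteadyState {n : ℕ} (C : CRN n) (y : Fin n → ℝ) : Prop :=
  ∀ j, odeRHS C y j = 0

/-- A P-invariant: a nonzero vector of naturals in the left kernel of the
stoichiometric matrix. -/
def PInvariant {n : ℕ} (C : CRN n) (V : Fin n → ℕ) : Prop :=
  V ≠ 0 ∧ ∀ r ∈ C, (∑ j : Fin n, (V j : ℤ) * ((r.P j : ℤ) - (r.R j : ℤ))) = 0

/-- A siphon: every reaction producing a species of `S` consumes a species of `S`. -/
def Siphon {n : ℕ} (C : CRN n) (S : Set (Fin n)) : Prop :=
  ∀ r ∈ C, (∃ j ∈ S, 0 < r.P j) → ∃ k ∈ S, 0 < r.R k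

/-- A critical siphon: a siphon containing the support of no P-invariant. -/
def CriticalSiphon {n : ℕ} (C : CRN n) (S : Set (Fin n)) : Prop :=
  Siphon C S ∧ ∀ V : Fin n → ℕ, PInvariant C V → ¬ ({j | 0 < V j} ⊆ S)

/-- An output species is produced and not consumed by every reaction. -/
def OutputSpecies {n : ℕ} (C : CRN n) (p : Fin n) : Prop :=
  ∀ r ∈ C, r.R p ≤ r.P p

/-- Synthesis-free: every reaction consumes something (R ≰ P). -/
def SynthesisFree {n : ℕ} (C : CRN n) : Prop :=
  ∀ r ∈ C, ∃ j, r.P j < r.R j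

/-- Fork-free: each species is a reactant of at most one reaction. -/
def ForkFree {n : ℕ} (C : CRN n) : Prop :=
  ∀ j : Fin n, ∀ i₁ i₂ : Fin C.length,
    0 < (C.get i₁).R j → 0 < (C.get i₂).R j → i₁ = i₂

/-- Directed edges of the bipartite reaction graph G_C. -/
def Edge {n : ℕ} (C : CRN n) :
    (Fin n ⊕ Fin C.length) → (Fin n ⊕ Fin C.length) → Prop
  | Sum.inl j, Sum.inr i => 0 < (C.get i).R j
  | Sum.inr i, Sum.inl j => 0 < (C.get i).P j
  | _, _ => False

/-- Loop-free: the bipartite graph G_C has no directed cycle. -/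
def LoopFree {n : ℕ} (C : CRN n) : Prop :=
  ¬ ∃ v, Relation.TransGen (Edge C) v v

/-- A funnel CRN is synthesis-free, loop-free and fork-free. -/
def Funnel {n : ℕ} (C : CRN n) : Prop :=
  SynthesisFree C ∧ LoopFree C ∧ ForkFree C

/-- Auxiliary: a function with nonnegative derivative on `[0,∞)` is monotone there. -/
lemma mono_aux {h g : ℝ → ℝ} (hd : ∀ t, 0 ≤ t → HasDerivAt h (g t) t)
    (hg : ∀ t, 0 ≤ t → 0 ≤ g t) : MonotoneOn h (Set.Ici (0:ℝ)) := by
  apply monotoneOn_of_deriv_nonneg (convex_Ici 0)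
  · exact fun t ht => (hd t ht).continuousAt.continuousWithinAt
  · intro t ht
    rw [interior_Ici] at ht
    exact (hd t ht.le).differentiableAt.differentiableWithinAt
  · intro t ht
    rw [interior_Ici] at ht
    rw [(hd t ht.le).deriv]
    exact hg t ht.le

/-- Auxiliary: a function with nonnegative derivative on `[0,∞)` which is bounded
above there converges at `+∞`. -/
lemma tendsto_aux {h g : ℝ → ℝ} {M : ℝ} (hd : ∀ t, 0 ≤ t → HasDerivAt h (g t) t)
    (hg : ∀ t, 0 ≤ t → 0 ≤ g t) (hM : ∀ t, 0 ≤ t → h t ≤ M) :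
    ∃ L, Filter.Tendsto h Filter.atTop (nhds L) := by
  have mono := mono_aux hd hg
  have hmono : Monotone (fun t => h (max t 0)) := fun s t hst =>
    mono (Set.mem_Ici.mpr (le_max_right _ _)) (Set.mem_Ici.mpr (le_max_right _ _)) (max_le_max hst le_rfl)
  have hbdd : BddAbove (Set.range fun t => h (max t 0)) := by
    refine ⟨M, ?_⟩
    rintro _ ⟨t, rfl⟩
    exact hM _ (le_max_right _ _)
  refine ⟨_, (tendsto_atTop_ciSup hmono hbdd).congr' ?_⟩
  filter_upwards [eventually_ge_atTop (0:ℝ)] with t ht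
  simp [max_eq_left ht]

/-- Key lemma: along the trajectory, each rate function of a well-formed funnel
CRN has a bounded "primitive". -/
lemma funnel_rate_bounded {n : ℕ} (C : CRN n) (hwf : WellFormed C) (hfun : Funnel C)
    (x : ℝ → Fin n → ℝ) (hsol : IsSolution C x) (hnn : NonnegSol x) :
    ∀ i : Fin C.length, ∃ h : ℝ → ℝ, ∃ M : ℝ,
      (∀ t, 0 ≤ t → HasDerivAt h ((C.get i).f (x t)) t) ∧ (∀ t, 0 ≤ t → h t ≤ M) := by
  classical
  obtain ⟨hsyn, hloop, hfork⟩ := hfun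
  haveI : IsIrrefl (Fin n ⊕ Fin C.length) (Relation.TransGen (Edge C)) :=
    ⟨fun v hv => hloop ⟨v, hv⟩⟩
  have hWF : WellFounded (Relation.TransGen (Edge C)) :=
    Finite.wellFounded_of_trans_of_irrefl _
  have hWF' : WellFounded (fun i i' : Fin C.length =>
      Relation.TransGen (Edge C) (Sum.inr i) (Sum.inr i')) :=
    InvImage.wf Sum.inr hWF
  intro i
  induction i using WellFounded.induction hWF' with
  | _ i IH => ?_
  obtain ⟨j, hj⟩ := hsyn (C.get i) (C.get_mem i)
  set c : ℝ := ((C.get i).R j : ℝ) - ((C.get i).P j : ℝ) with hc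
  have hcpos : 0 < c := sub_pos.mpr (by exact_mod_cast hj)
  have hRpos : 0 < (C.get i).R j := lt_of_le_of_lt (Nat.zero_le _) hj
  set T : Finset (Fin C.length) :=
    Finset.univ.filter (fun i' => i' ≠ i ∧ 0 < (C.get i').P j) with hT
  have hTmem : ∀ i', i' ∈ T ↔ i' ≠ i ∧ 0 < (C.get i').P j := by
    intro i'; simp [hT]
  have hpred : ∀ i' ∈ T, Relation.TransGen (Edge C) (Sum.inr i') (Sum.inr i) := by
    intro i' hi'
    rw [hTmem] at hi'
    exact Relation.TransGen.head (show Edge C (Sum.inr i') (Sum.inl j) from hi'.2)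
      (Relation.TransGen.single (show Edge C (Sum.inl j) (Sum.inr i) from hRpos))
  choose h M hder hbd using fun (i' : T) => IH i'.1 (hpred i'.1 i'.2)
  have hR0 : ∀ i' : Fin C.length, i' ≠ i → (C.get i').R j = 0 := by
    intro i' hne
    by_contra hpos
    exact hne (hfork j i' i (Nat.pos_of_ne_zero hpos) hRpos)
  have hsum : ∀ y : Fin n → ℝ, odeRHS C y j
      = -(c * (C.get i).f y) +
        ∑ i' ∈ T.attach, ((C.get i'.1).P j : ℝ) * (C.get i'.1).f y := by
    intro y
    rw [Finset.sum_attach T (fun i' => ((C.get i').P j : ℝ) * (C.get i').f y)]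
    unfold odeRHS
    rw [← Finset.add_sum_erase _ _ (Finset.mem_univ i)]
    congr 1
    · rw [hc]; ring
    · rw [show ∑ i' ∈ Finset.univ.erase i,
          (((C.get i').P j : ℝ) - ((C.get i').R j : ℝ)) * (C.get i').f y
          = ∑ i' ∈ Finset.univ.erase i, ((C.get i').P j : ℝ) * (C.get i').f y from
        Finset.sum_congr rfl (fun i' hi' => by
          rw [hR0 i' (Finset.ne_of_mem_erase hi')]; simp)]
      refine (Finset.sum_subset ?_ ?_).symm
      · intro i' hi'
        rw [hTmem] at hi'
        exact Finset.mem_erase.mpr ⟨hi'.1, Finset.mem_univ _⟩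
      · intro i' hi' hnotT
        rw [hTmem] at hnotT
        push_neg at hnotT
        have : (C.get i').P j = 0 :=
          Nat.le_zero.mp (hnotT (Finset.ne_of_mem_erase hi'))
        rw [this]; simp
  refine ⟨fun t => c⁻¹ * (x 0 j - x t j +
      ∑ i' ∈ T.attach, ((C.get i'.1).P j : ℝ) * h i' t),
    c⁻¹ * (x 0 j + ∑ i' ∈ T.attach, ((C.get i'.1).P j : ℝ) * M i'), ?_, ?_⟩
  · intro t ht
    have hx := hsol t ht j
    have hG : HasDerivAt (fun s => ∑ i' ∈ T.attach, ((C.get i'.1).P j : ℝ) * h i' s)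
        (∑ i' ∈ T.attach, ((C.get i'.1).P j : ℝ) * (C.get i'.1).f (x t)) t :=
      HasDerivAt.fun_sum (fun i' _ => (hder i' t ht).const_mul _)
    have hD := (((hasDerivAt_const t (x 0 j)).sub hx).add hG).const_mul c⁻¹
    refine hD.congr_deriv ?_
    rw [hsum (x t)]
    field_simp
    ring
  · intro t ht
    have h1 : x 0 j - x t j ≤ x 0 j := by
      have := hnn t ht j; linarith
    have h2 : ∑ i' ∈ T.attach, ((C.get i'.1).P j : ℝ) * h i' t
        ≤ ∑ i' ∈ T.attach, ((C.get i'.1).P j : ℝ) * M i' :=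
      Finset.sum_le_sum fun i' _ =>
        mul_le_mul_of_nonneg_left (hbd i' t ht) (Nat.cast_nonneg _)
    exact mul_le_mul_of_nonneg_left (add_le_add h1 h2) (inv_nonneg.mpr hcpos.le)

/-- Every species of a well-formed funnel CRN converges to a
finite limit along any nonnegative solution from a nonnegative initial state. -/
theorem funnel_all_species_converge {n : ℕ} (C : CRN n)
    (hwf : WellFormed C) (hfun : Funnel C)
    (x : ℝ → Fin n → ℝ) (x0 : Fin n → ℝ)
    (hinit : x 0 = x0) (hx0nn : ∀ j, 0 ≤ x0 j)
    (hsol : IsSolution C x) (hnn : NonnegSol x) :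
    ∀ j : Fin n, ∃ L : ℝ,
      Filter.Tendsto (fun t => x t j) Filter.atTop (nhds L) := by
  intro k
  classical
  choose h M hder hbd using funnel_rate_bounded C hwf hfun x hsol hnn
  have hf_nonneg : ∀ (i : Fin C.length) (t : ℝ), 0 ≤ t → 0 ≤ (C.get i).f (x t) :=
    fun i t _ => (hwf (C.get i) (C.get_mem i)).1 (x t)
  choose L hL using fun i =>
    tendsto_aux (hder i) (fun t ht => hf_nonneg i t ht) (hbd i)
  set φ : ℝ → ℝ := fun t =>
    ∑ i : Fin C.length, (((C.get i).P k : ℝ) - ((C.get i).R k : ℝ)) * h i t with hφ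
  have hφd : ∀ t, 0 ≤ t → HasDerivAt φ (odeRHS C (x t) k) t := by
    intro t ht
    exact HasDerivAt.fun_sum (fun i _ => (hder i t ht).const_mul _)
  have hd0 : ∀ s, 0 ≤ s → HasDerivAt (fun u => x u k - φ u) 0 s := by
    intro s hs
    simpa using (hsol s hs k).fun_sub (hφd s hs)
  have hconst : ∀ t, 0 ≤ t → x t k - φ t = x 0 k - φ 0 := by
    intro t ht
    have m1 := mono_aux (g := fun _ => (0:ℝ)) hd0 (fun _ _ => le_rfl)
    have m2 := mono_aux (g := fun _ => (0:ℝ))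
      (h := fun u => -(x u k - φ u)) (fun s hs => by simpa using (hd0 s hs).fun_neg)
      (fun _ _ => le_rfl)
    have a1 := m1 (Set.self_mem_Ici) (Set.mem_Ici.mpr ht) ht
    have a2 := m2 (Set.self_mem_Ici) (Set.mem_Ici.mpr ht) ht
    simp only at a1 a2
    linarith
  have hφlim : Filter.Tendsto φ Filter.atTop
      (nhds (∑ i : Fin C.length, (((C.get i).P k : ℝ) - ((C.get i).R k : ℝ)) * L i)) :=
    tendsto_finset_sum _ fun i _ => (hL i).const_mul _
  refine ⟨x 0 k - φ 0 + ∑ i : Fin C.length,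
      (((C.get i).P k : ℝ) - ((C.get i).R k : ℝ)) * L i, ?_⟩
  have heq : (fun t => (x 0 k - φ 0) + φ t) =ᶠ[Filter.atTop] fun t => x t k := by
    filter_upwards [eventually_ge_atTop (0:ℝ)] with t ht
    have := hconst t ht
    linarith
  exact (tendsto_const_nhds.add hφlim).congr' heq
end

section
/- Let C be a funnel CRN with m reactions over n species, and let φ ∈ ℝ^m be any vector such that Σᵢ (Pᵢ(j) − Rᵢ(j))·φᵢ = 0 for every species j (i.e., φ lies in the right kernel of the stoichiometric matrix N with N_{j,i} = Pᵢ(j) − Rᵢ(j)). Then φ = 0. In particular, at any steady state x* of ODE(C), the steady flux fᵢ(x*) of every reaction i is equal to 0. -/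
open Filter Topology MeasureTheory

/-- The right kernel of the stoichiometric matrix of a funnel
CRN is trivial; in particular all fluxes vanish at any steady state. -/
theorem funnel_steady_fluxes_zero {n : ℕ} (C : CRN n) (hfun : Funnel C) :
    (∀ φ : Fin C.length → ℝ,
      (∀ j : Fin n,
        ∑ i : Fin C.length,
          (((C.get i).P j : ℝ) - ((C.get i).R j : ℝ)) * φ i = 0) →
      φ = 0) ∧
    (∀ xs : Fin n → ℝ, SteadyState C xs →
      ∀ i : Fin C.length, (C.get i).f xs = 0) := by
  obtain ⟨hsyn, hloop, hfork⟩ := hfun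
  have key : ∀ φ : Fin C.length → ℝ,
      (∀ j : Fin n,
        ∑ i : Fin C.length,
          (((C.get i).P j : ℝ) - ((C.get i).R j : ℝ)) * φ i = 0) → φ = 0 := by
    intro φ hφ
    have hirr : IsIrrefl _ (Relation.TransGen (Edge C)) :=
      ⟨fun v h => hloop ⟨v, h⟩⟩
    have hwf : WellFounded (Relation.TransGen (Edge C)) :=
      Finite.wellFounded_of_trans_of_irrefl _
    funext i
    show φ i = 0
    have main : ∀ v : Fin n ⊕ Fin C.length, (∀ k : Fin C.length, v = Sum.inr k → φ k = 0) := by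
      intro v
      induction v using hwf.induction with
      | _ v IH =>
        intro k hv
        subst hv
        obtain ⟨j, hj⟩ := hsyn (C.get k) (C.get_mem k)
        have hRk : 0 < (C.get k).R j := lt_of_le_of_lt (Nat.zero_le _) hj
        have hsum := hφ j
        rw [Finset.sum_eq_single k] at hsum
        · have hco : (((C.get k).P j : ℝ) - ((C.get k).R j : ℝ)) ≠ 0 := by
            have : ((C.get k).P j : ℝ) < ((C.get k).R j : ℝ) := by
              exact_mod_cast hj
            linarith
          exact (mul_eq_zero.mp hsum).resolve_left hco
        · intro i _ hik
          have hRi : (C.get i).R j = 0 := by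
            by_contra h
            exact hik (hfork j i k (Nat.pos_of_ne_zero h) hRk)
          rcases Nat.eq_zero_or_pos ((C.get i).P j) with hP | hP
          · simp only [List.get_eq_getElem] at hRi hP
            simp [hRi, hP]
          · have hedge : Relation.TransGen (Edge C) (Sum.inr i) (Sum.inr k) :=
              Relation.TransGen.head (b := Sum.inl j) hP
                (Relation.TransGen.single hRk)
            have : φ i = 0 := IH (Sum.inr i) hedge i rfl
            simp [this]
        · intro h
          exact absurd (Finset.mem_univ k) h
    exact main (Sum.inr i) i rfl
  refine ⟨key, ?_⟩
  intro xs hss i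
  have := key (fun i => (C.get i).f xs) (fun j => hss j)
  exact congrFun this i
end

section
/- Let C be a well-formed funnel CRN and x a nonnegative solution of ODE(C) on [0,∞) from an initial state x⁰ ≥ 0 converging to a steady state. For each species i define the total amount x_i⁺ = x_i(0) + ∫₀^∞ Σ_{j : Pⱼ(i) > Rⱼ(i)} (Pⱼ(i) − Rⱼ(i))·fⱼ(x(t)) dt. Then each x_i⁺ is finite and depends only on the initial state x⁰ and the stoichiometry, not on the rate functions: if C′ is another well-formed funnel CRN with the same stoichiometry (the same lists (Rᵢ, Pᵢ)) and x′ is a nonnegative solution of ODE(C′) on [0,∞) from the same x⁰ converging to a steady state, then the total amount of each species i computed along x′ equals x_i⁺. -/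
open Filter Topology MeasureTheory

/-- The instantaneous production rate of species `i` along trajectory `x`:
the sum over reactions net-producing `i` of the net stoichiometry times the
rate. -/
noncomputable def productionRate {n : ℕ} (C : CRN n) (x : ℝ → Fin n → ℝ)
    (i : Fin n) (t : ℝ) : ℝ :=
  ∑ idx : Fin C.length,
    if (C.get idx).R i < (C.get idx).P i then
      (((C.get idx).P i : ℝ) - ((C.get idx).R i : ℝ)) * (C.get idx).f (x t)
    else 0


namespace FunnelProof

open Set

variable {n : ℕ}

/-- Strict "upstream" order on reaction indices. -/
def rOrd (C : CRN n) (a b : Fin C.length) : Prop :=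
  Relation.TransGen (Edge C) (Sum.inr a) (Sum.inr b)

lemma rOrd_wf (C : CRN n) (hlf : LoopFree C) : WellFounded (rOrd C) := by
  haveI : IsIrrefl (Fin n ⊕ Fin C.length) (Relation.TransGen (Edge C)) :=
    ⟨fun v h => hlf ⟨v, h⟩⟩
  haveI : IsTrans (Fin n ⊕ Fin C.length) (Relation.TransGen (Edge C)) :=
    ⟨fun _ _ _ h1 h2 => Relation.TransGen.trans h1 h2⟩
  exact InvImage.wf _ (Finite.wellFounded_of_trans_of_irrefl (Relation.TransGen (Edge C)))

lemma upstream {C : CRN n} {k idx : Fin C.length} {j : Fin n}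
    (hP : 0 < (C.get k).P j) (hR : 0 < (C.get idx).R j) : rOrd C k idx :=
  Relation.TransGen.head (show Edge C (Sum.inr k) (Sum.inl j) from hP)
    (Relation.TransGen.single (show Edge C (Sum.inl j) (Sum.inr idx) from hR))

lemma P_eq_zero {C : CRN n} (hlf : LoopFree C) {idx : Fin C.length} {j : Fin n}
    (hR : 0 < (C.get idx).R j) : (C.get idx).P j = 0 := by
  by_contra hP
  exact hlf ⟨Sum.inr idx, Relation.TransGen.head
    (show Edge C (Sum.inr idx) (Sum.inl j) from Nat.pos_of_ne_zero hP)
    (Relation.TransGen.single (show Edge C (Sum.inl j) (Sum.inr idx) from hR))⟩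

lemma sum_split {C : CRN n} (hff : ForkFree C) (hlf : LoopFree C)
    {idx : Fin C.length} {j : Fin n} (hR : 0 < (C.get idx).R j) (w : Fin C.length → ℝ) :
    ∑ k : Fin C.length, (((C.get k).P j : ℝ) - ((C.get k).R j : ℝ)) * w k
      = (∑ k : Fin C.length, if k = idx then 0 else ((C.get k).P j : ℝ) * w k)
        - ((C.get idx).R j : ℝ) * w idx := by
  have hP0 : (C.get idx).P j = 0 := P_eq_zero hlf hR
  have key : ∀ k : Fin C.length,
      (((C.get k).P j : ℝ) - ((C.get k).R j : ℝ)) * w k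
        = (if k = idx then 0 else ((C.get k).P j : ℝ) * w k)
          + (if k = idx then -(((C.get idx).R j : ℝ) * w idx) else 0) := by
    intro k
    by_cases hk : k = idx
    · subst hk
      rw [if_pos rfl, if_pos rfl, hP0]
      push_cast
      ring
    · have hRk : (C.get k).R j = 0 := by
        by_contra hRk
        exact hk (hff j k idx (Nat.pos_of_ne_zero hRk) hR)
      rw [if_neg hk, if_neg hk, hRk]
      push_cast
      ring
  rw [Finset.sum_congr rfl fun k _ => key k, Finset.sum_add_distrib,
    Finset.sum_ite_eq' Finset.univ idx fun _ => -(((C.get idx).R j : ℝ) * w idx)]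
  simp [sub_eq_add_neg]

lemma steady_rates_zero {C : CRN n} (hwf : WellFormed C) (hfun : Funnel C)
    {xs : Fin n → ℝ} (hss : SteadyState C xs) :
    ∀ idx : Fin C.length, (C.get idx).f xs = 0 := by
  obtain ⟨hsf, hlf, hff⟩ := hfun
  have hmem : ∀ k : Fin C.length, C.get k ∈ C := fun k => C.get_mem _
  intro idx
  induction idx using (rOrd_wf C hlf).induction with
  | _ idx IH =>
    obtain ⟨j, hj⟩ := hsf (C.get idx) (hmem idx)
    have hR : 0 < (C.get idx).R j := lt_of_le_of_lt (Nat.zero_le _) hj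
    have h0 := hss j
    rw [odeRHS, sum_split hff hlf hR (fun k => (C.get k).f xs)] at h0
    have hsum : (∑ k : Fin C.length,
        if k = idx then 0 else ((C.get k).P j : ℝ) * (C.get k).f xs) = 0 := by
      apply Finset.sum_eq_zero
      intro k _
      by_cases hk : k = idx
      · simp [hk]
      · rw [if_neg hk]
        by_cases hP : 0 < (C.get k).P j
        · rw [IH k (upstream hP hR)]; ring
        · rw [Nat.eq_zero_of_not_pos hP]
          simp
    rw [hsum] at h0
    have hRne : ((C.get idx).R j : ℝ) ≠ 0 := by positivity
    have hf : ((C.get idx).R j : ℝ) * (C.get idx).f xs = 0 := by linarith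
    rcases mul_eq_zero.mp hf with h | h
    · exact absurd h hRne
    · exact h


lemma integrable_rates {C : CRN n} (hwf : WellFormed C) (hfun : Funnel C)
    {x : ℝ → Fin n → ℝ} (hsol : IsSolution C x) (hnn : NonnegSol x) :
    ∀ idx : Fin C.length,
      IntegrableOn (fun t => (C.get idx).f (x t)) (Set.Ici (0:ℝ)) := by
  obtain ⟨hsf, hlf, hff⟩ := hfun
  have hmem : ∀ k : Fin C.length, C.get k ∈ C := fun k => C.get_mem _
  have hfnn : ∀ (k : Fin C.length) (y : Fin n → ℝ), 0 ≤ (C.get k).f y :=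
    fun k y => (hwf _ (hmem k)).1 y
  intro idx
  induction idx using (rOrd_wf C hlf).induction with
  | _ idx IH =>
  obtain ⟨j, hj⟩ := hsf (C.get idx) (hmem idx)
  have hR : 0 < (C.get idx).R j := lt_of_le_of_lt (Nat.zero_le _) hj
  set c : ℝ := ((C.get idx).R j : ℝ) with hc_def
  have hc : 0 < c := by rw [hc_def]; exact_mod_cast hR
  set h : Fin C.length → ℝ → ℝ := fun k t => (C.get k).f (x t) with hh
  set inflow : ℝ → ℝ :=
    fun t => ∑ k : Fin C.length, if k = idx then 0 else ((C.get k).P j : ℝ) * h k t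
    with hinflow
  have hinfl_int : IntegrableOn inflow (Set.Ici (0:ℝ)) := by
    apply MeasureTheory.integrable_finset_sum
    intro k _
    by_cases hk : k = idx
    · simpa [hk] using (integrable_zero _ _ _ : Integrable (fun _ : ℝ => (0:ℝ))
        (volume.restrict (Set.Ici (0:ℝ))))
    · by_cases hP : 0 < (C.get k).P j
      · simpa [hk, hh] using ((IH k (upstream hP hR)).const_mul (((C.get k).P j : ℝ)))
      · simp only [if_neg hk, Nat.eq_zero_of_not_pos hP, Nat.cast_zero, zero_mul]
        exact integrable_zero _ _ _
  have hinfl_nn : ∀ t, 0 ≤ inflow t := by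
    intro t
    apply Finset.sum_nonneg
    intro k _
    by_cases hk : k = idx
    · simp [hk]
    · rw [if_neg hk]
      exact mul_nonneg (Nat.cast_nonneg _) (hfnn k (x t))
  have hu : ∀ t, 0 ≤ t → HasDerivAt (fun s => x s j) (inflow t - c * h idx t) t := by
    intro t ht
    have h1 := hsol t ht j
    have e : odeRHS C (x t) j = inflow t - c * h idx t := by
      rw [odeRHS, sum_split hff hlf hR (fun k => (C.get k).f (x t))]
    rwa [e] at h1
  -- measurability of the rate along the trajectory
  have hD : Measurable (deriv (fun s => x s j)) := measurable_deriv _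
  have hinfl_meas : AEMeasurable inflow (volume.restrict (Set.Ici (0:ℝ))) :=
    hinfl_int.aemeasurable
  have hg_meas : AEMeasurable
      (fun t => (inflow t - deriv (fun s => x s j) t) / c)
      (volume.restrict (Set.Ici (0:ℝ))) :=
    (hinfl_meas.sub hD.aemeasurable).div_const c
  have heq : ∀ t ∈ Set.Ici (0:ℝ),
      (fun t => (inflow t - deriv (fun s => x s j) t) / c) t = h idx t := by
    intro t ht
    have hd : deriv (fun s => x s j) t = inflow t - c * h idx t := (hu t ht).deriv
    show (inflow t - deriv (fun s => x s j) t) / c = h idx t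
    rw [hd]
    field_simp
    ring
  have hmeas : AEMeasurable (h idx) (volume.restrict (Set.Ici (0:ℝ))) := by
    refine hg_meas.congr ?_
    exact Filter.eventuallyEq_of_mem (self_mem_ae_restrict measurableSet_Ici) heq
  -- the uniform bound
  set A : ℝ := ∫ t in Set.Ici (0:ℝ), inflow t with hA
  have hx0 : 0 ≤ x 0 j := hnn 0 le_rfl j
  set B : ℝ := (x 0 j + A) / c with hB
  have hminmeas : ∀ N : ℕ, AEMeasurable (fun t => min (h idx t) (N:ℝ))
      (volume.restrict (Set.Icc (0:ℝ) (N:ℝ))) := by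
    intro N
    exact ((hmeas.mono_measure
      (Measure.restrict_mono Set.Icc_subset_Ici_self le_rfl)).min aemeasurable_const)
  have hminint : ∀ N : ℕ, IntegrableOn (fun t => min (h idx t) (N:ℝ))
      (Set.Icc (0:ℝ) (N:ℝ)) := by
    intro N
    refine Integrable.mono' (g := fun _ => (N:ℝ))
      (integrableOn_const measure_Icc_lt_top.ne)
      (hminmeas N).aestronglyMeasurable ?_
    refine Filter.Eventually.of_forall fun t => ?_
    rw [Real.norm_eq_abs, abs_of_nonneg (le_min (hfnn idx (x t)) (Nat.cast_nonneg N))]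
    exact min_le_right _ _
  have hbound : ∀ N : ℕ, ∫ t in Set.Icc (0:ℝ) (N:ℝ), min (h idx t) (N:ℝ) ≤ B := by
    intro N
    set T : ℝ := (N:ℝ) with hT_def
    have hT : (0:ℝ) ≤ T := Nat.cast_nonneg N
    have hIccIci : Set.Icc (0:ℝ) T ⊆ Set.Ici 0 := Set.Icc_subset_Ici_self
    have hφint : IntegrableOn (fun t => inflow t - c * min (h idx t) (N:ℝ))
        (Set.Icc (0:ℝ) T) :=
      (hinfl_int.mono_set hIccIci).sub ((hminint N).const_mul c)
    have hkey : x T j - x 0 j ≤ ∫ t in (0:ℝ)..T, (inflow t - c * min (h idx t) (N:ℝ)) := by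
      refine intervalIntegral.sub_le_integral_of_hasDeriv_right_of_le hT
        (g := fun s => x s j) (g' := fun t => inflow t - c * h idx t) ?_ ?_ hφint ?_
      · intro t ht
        exact (hu t ht.1).continuousAt.continuousWithinAt
      · intro t ht
        exact (hu t ht.1.le).hasDerivWithinAt
      · intro t _
        have h1 : c * min (h idx t) (N:ℝ) ≤ c * h idx t :=
          mul_le_mul_of_nonneg_left (min_le_left _ _) hc.le
        show inflow t - c * h idx t ≤ inflow t - c * min (h idx t) (N:ℝ)
        linarith
    have i1 : IntervalIntegrable inflow volume 0 T :=
      (hinfl_int.mono_set (by rw [Set.uIcc_of_le hT]; exact hIccIci)).intervalIntegrable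
    have i2 : IntervalIntegrable (fun t => min (h idx t) (N:ℝ)) volume 0 T := by
      refine IntegrableOn.intervalIntegrable ?_
      rw [Set.uIcc_of_le hT]
      exact hminint N
    have hIoc : ∫ t in (0:ℝ)..T, (inflow t - c * min (h idx t) (N:ℝ))
        = (∫ t in (0:ℝ)..T, inflow t) - c * ∫ t in (0:ℝ)..T, min (h idx t) (N:ℝ) := by
      rw [intervalIntegral.integral_sub i1 (i2.const_mul c),
        intervalIntegral.integral_const_mul]
    have hinfl_le : ∫ t in (0:ℝ)..T, inflow t ≤ A := by
      rw [intervalIntegral.integral_of_le hT]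
      exact setIntegral_mono_set hinfl_int
        (Filter.Eventually.of_forall hinfl_nn)
        (HasSubset.Subset.eventuallyLE (Set.Ioc_subset_Icc_self.trans Set.Icc_subset_Ici_self))
    have hxT : 0 ≤ x T j := hnn T hT j
    have hmain : c * ∫ t in (0:ℝ)..T, min (h idx t) (N:ℝ) ≤ x 0 j + A := by
      rw [hIoc] at hkey
      linarith
    have hIccIoc : ∫ t in Set.Icc (0:ℝ) T, min (h idx t) (N:ℝ)
        = ∫ t in (0:ℝ)..T, min (h idx t) (N:ℝ) := by
      rw [intervalIntegral.integral_of_le hT, integral_Icc_eq_integral_Ioc]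
    rw [hIccIoc, hB, le_div_iff₀ hc]
    linarith
  -- finiteness of the lintegral via truncation
  have hlint : ∫⁻ t in Set.Ici (0:ℝ), ENNReal.ofReal (h idx t) ≤ ENNReal.ofReal B := by
    set G : ℕ → ℝ → ENNReal := fun N t =>
      Set.indicator (Set.Icc (0:ℝ) (N:ℝ)) (fun t => ENNReal.ofReal (min (h idx t) (N:ℝ))) t
      with hG
    have hGmeas : ∀ N, AEMeasurable (G N) (volume.restrict (Set.Ici (0:ℝ))) := by
      intro N
      refine AEMeasurable.indicator ?_ measurableSet_Icc
      exact (hmeas.min aemeasurable_const).ennreal_ofReal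
    have hGmono : ∀ t, Monotone fun N => G N t := by
      intro t N M hNM
      by_cases ht : t ∈ Set.Icc (0:ℝ) (N:ℝ)
      · have ht' : t ∈ Set.Icc (0:ℝ) (M:ℝ) :=
          ⟨ht.1, ht.2.trans (by exact_mod_cast hNM)⟩
        simp only [hG, Set.indicator_of_mem ht, Set.indicator_of_mem ht']
        exact ENNReal.ofReal_le_ofReal
          (le_min (min_le_left _ _) ((min_le_right _ _).trans (by exact_mod_cast hNM)))
      · simp [hG, Set.indicator_of_notMem ht]
    have hGsup : ∀ t ∈ Set.Ici (0:ℝ), (⨆ N, G N t) = ENNReal.ofReal (h idx t) := by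
      intro t ht
      apply le_antisymm
      · refine iSup_le fun N => ?_
        by_cases htm : t ∈ Set.Icc (0:ℝ) (N:ℝ)
        · simp only [hG, Set.indicator_of_mem htm]
          exact ENNReal.ofReal_le_ofReal (min_le_left _ _)
        · simp [hG, Set.indicator_of_notMem htm]
      · obtain ⟨N, hN1, hN2⟩ : ∃ N : ℕ, t ≤ (N:ℝ) ∧ h idx t ≤ (N:ℝ) := by
          obtain ⟨N, hN⟩ := exists_nat_ge (max t (h idx t))
          exact ⟨N, (le_max_left _ _).trans hN, (le_max_right _ _).trans hN⟩
        refine le_trans ?_ (le_iSup _ N)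
        simp only [hG, Set.indicator_of_mem (Set.mem_Icc.2 ⟨ht, hN1⟩)]
        rw [min_eq_left hN2]
    calc ∫⁻ t in Set.Ici (0:ℝ), ENNReal.ofReal (h idx t)
        = ∫⁻ t in Set.Ici (0:ℝ), ⨆ N, G N t := by
          refine lintegral_congr_ae ?_
          filter_upwards [self_mem_ae_restrict measurableSet_Ici] with t ht
          exact (hGsup t ht).symm
      _ = ⨆ N, ∫⁻ t in Set.Ici (0:ℝ), G N t :=
          lintegral_iSup' hGmeas (Filter.Eventually.of_forall hGmono)
      _ ≤ ENNReal.ofReal B := by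
          refine iSup_le fun N => ?_
          show ∫⁻ t in Set.Ici (0:ℝ), (Set.Icc (0:ℝ) (N:ℝ)).indicator
            (fun t => ENNReal.ofReal (min (h idx t) (N:ℝ))) t ≤ ENNReal.ofReal B
          rw [lintegral_indicator measurableSet_Icc,
            Measure.restrict_restrict measurableSet_Icc,
            Set.inter_eq_self_of_subset_left Set.Icc_subset_Ici_self,
            ← ofReal_integral_eq_lintegral_ofReal (hminint N)
              (Filter.Eventually.of_forall fun t =>
                le_min (hfnn idx (x t)) (Nat.cast_nonneg N))]
          exact ENNReal.ofReal_le_ofReal (hbound N)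
  refine ⟨hmeas.aestronglyMeasurable, ?_⟩
  rw [hasFiniteIntegral_iff_ofReal
    (Filter.Eventually.of_forall fun t => hfnn idx (x t))]
  exact lt_of_le_of_lt hlint ENNReal.ofReal_lt_top


lemma balance {C : CRN n} (hwf : WellFormed C) (hfun : Funnel C)
    {x : ℝ → Fin n → ℝ} (hsol : IsSolution C x) (hnn : NonnegSol x)
    {xs : Fin n → ℝ} (hconv : Filter.Tendsto x Filter.atTop (nhds xs)) (j : Fin n) :
    xs j = x 0 j + ∑ idx : Fin C.length,
      (((C.get idx).P j : ℝ) - ((C.get idx).R j : ℝ)) *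
        ∫ t in Set.Ici (0:ℝ), (C.get idx).f (x t) := by
  have hint := integrable_rates hwf hfun hsol hnn
  have hode_int : IntegrableOn (fun t => odeRHS C (x t) j) (Set.Ici (0:ℝ)) := by
    simp only [odeRHS]
    exact MeasureTheory.integrable_finset_sum _ fun i _ => (hint i).const_mul _
  have hFTC : ∀ T : ℝ, 0 ≤ T → x T j - x 0 j = ∫ t in (0:ℝ)..T, odeRHS C (x t) j := by
    intro T hT
    rw [intervalIntegral.integral_eq_sub_of_hasDerivAt (f := fun s => x s j)]
    · intro t ht
      rw [Set.uIcc_of_le hT] at ht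
      exact hsol t ht.1 j
    · refine IntegrableOn.intervalIntegrable ?_
      rw [Set.uIcc_of_le hT]
      exact hode_int.mono_set Set.Icc_subset_Ici_self
  have h1 : Filter.Tendsto (fun T : ℝ => x T j - x 0 j) Filter.atTop
      (nhds (xs j - x 0 j)) := (tendsto_pi_nhds.1 hconv j).sub_const _
  have h2 : Filter.Tendsto (fun T : ℝ => ∫ t in (0:ℝ)..T, odeRHS C (x t) j)
      Filter.atTop (nhds (∫ t in Set.Ioi (0:ℝ), odeRHS C (x t) j)) :=
    MeasureTheory.intervalIntegral_tendsto_integral_Ioi 0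
      (hode_int.mono_set Set.Ioi_subset_Ici_self) Filter.tendsto_id
  have h3 : xs j - x 0 j = ∫ t in Set.Ioi (0:ℝ), odeRHS C (x t) j := by
    refine tendsto_nhds_unique (h1.congr' ?_) h2
    filter_upwards [Filter.eventually_ge_atTop (0:ℝ)] with T hT
    exact hFTC T hT
  rw [← MeasureTheory.integral_Ici_eq_integral_Ioi] at h3
  have h4 : ∫ t in Set.Ici (0:ℝ), odeRHS C (x t) j
      = ∑ idx : Fin C.length, (((C.get idx).P j : ℝ) - ((C.get idx).R j : ℝ)) *
          ∫ t in Set.Ici (0:ℝ), (C.get idx).f (x t) := by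
    simp only [odeRHS]
    rw [MeasureTheory.integral_finset_sum _ fun i _ => (hint i).const_mul _]
    exact Finset.sum_congr rfl fun i _ => MeasureTheory.integral_const_mul _ _
  rw [h4] at h3
  linarith


lemma limit_nonneg {x : ℝ → Fin n → ℝ} (hnn : NonnegSol x) {xs : Fin n → ℝ}
    (hconv : Filter.Tendsto x Filter.atTop (nhds xs)) (j : Fin n) : 0 ≤ xs j :=
  ge_of_tendsto (tendsto_pi_nhds.1 hconv j)
    ((Filter.eventually_ge_atTop (0:ℝ)).mono fun t ht => hnn t ht j)

lemma balance_reactant {C : CRN n} (hwf : WellFormed C) (hfun : Funnel C)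
    {x : ℝ → Fin n → ℝ} (hsol : IsSolution C x) (hnn : NonnegSol x)
    {xs : Fin n → ℝ} (hconv : Filter.Tendsto x Filter.atTop (nhds xs))
    {idx : Fin C.length} {j : Fin n} (hR : 0 < (C.get idx).R j) :
    ((C.get idx).R j : ℝ) * (∫ t in Set.Ici (0:ℝ), (C.get idx).f (x t))
      = x 0 j + (∑ k : Fin C.length, if k = idx then 0 else
          ((C.get k).P j : ℝ) * ∫ t in Set.Ici (0:ℝ), (C.get k).f (x t)) - xs j := by
  have hb := balance hwf hfun hsol hnn hconv j
  rw [sum_split hfun.2.2 hfun.2.1 hR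
    (fun k => ∫ t in Set.Ici (0:ℝ), (C.get k).f (x t))] at hb
  linarith

lemma integral_rate_eq {C C' : CRN n} (hwf : WellFormed C) (hwf' : WellFormed C')
    (hfun : Funnel C) (hfun' : Funnel C') (hlen : C.length = C'.length)
    (hstoich : ∀ i : Fin C.length,
      (C.get i).R = (C'.get (Fin.cast hlen i)).R ∧
      (C.get i).P = (C'.get (Fin.cast hlen i)).P)
    {x x' : ℝ → Fin n → ℝ}
    (hsol : IsSolution C x) (hnn : NonnegSol x)
    (hsol' : IsSolution C' x') (hnn' : NonnegSol x')
    (hinit : x 0 = x' 0)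
    {xs xs' : Fin n → ℝ}
    (hss : SteadyState C xs) (hconv : Filter.Tendsto x Filter.atTop (nhds xs))
    (hss' : SteadyState C' xs') (hconv' : Filter.Tendsto x' Filter.atTop (nhds xs')) :
    ∀ idx : Fin C.length,
      ∫ t in Set.Ici (0:ℝ), (C.get idx).f (x t)
        = ∫ t in Set.Ici (0:ℝ), (C'.get (Fin.cast hlen idx)).f (x' t) := by
  have hmem : ∀ k : Fin C.length, C.get k ∈ C := fun k => C.get_mem _
  have hmem' : ∀ k : Fin C'.length, C'.get k ∈ C' := fun k => C'.get_mem _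
  set F : Fin C.length → ℝ :=
    fun k => ∫ t in Set.Ici (0:ℝ), (C.get k).f (x t) with hF
  set F' : Fin C.length → ℝ :=
    fun k => ∫ t in Set.Ici (0:ℝ), (C'.get (Fin.cast hlen k)).f (x' t) with hF'
  intro idx
  induction idx using (rOrd_wf C hfun.2.1).induction with
  | _ idx IH =>
  show F idx = F' idx
  -- the two balance relations at any reactant of `idx`
  have key : ∀ j : Fin n, 0 < (C.get idx).R j →
      ((C.get idx).R j : ℝ) * F idx - ((C.get idx).R j : ℝ) * F' idx = xs' j - xs j := by
    intro j hRj
    have hbal : ((C.get idx).R j : ℝ) * F idx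
        = x 0 j + (∑ k : Fin C.length, if k = idx then 0 else
            ((C.get k).P j : ℝ) * F k) - xs j :=
      balance_reactant hwf hfun hsol hnn hconv hRj
    have hR'j : 0 < (C'.get (Fin.cast hlen idx)).R j := by
      rw [← (hstoich idx).1]; exact hRj
    have hbal'0 : ((C'.get (Fin.cast hlen idx)).R j : ℝ) * F' idx
        = x' 0 j + (∑ k' : Fin C'.length, if k' = Fin.cast hlen idx then 0 else
            ((C'.get k').P j : ℝ) * ∫ t in Set.Ici (0:ℝ), (C'.get k').f (x' t)) - xs' j :=
      balance_reactant hwf' hfun' hsol' hnn' hconv' hR'j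
    have hsum : (∑ k' : Fin C'.length, if k' = Fin.cast hlen idx then 0 else
          ((C'.get k').P j : ℝ) * ∫ t in Set.Ici (0:ℝ), (C'.get k').f (x' t))
        = ∑ k : Fin C.length, if k = idx then 0 else ((C.get k).P j : ℝ) * F k := by
      rw [← Fintype.sum_equiv (finCongr hlen)
        (fun k => if (finCongr hlen) k = Fin.cast hlen idx then 0 else
          ((C'.get ((finCongr hlen) k)).P j : ℝ) *
            ∫ t in Set.Ici (0:ℝ), (C'.get ((finCongr hlen) k)).f (x' t))
        _ (fun k => rfl)]
      refine Finset.sum_congr rfl fun k _ => ?_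
      have hcast : ((finCongr hlen) k = Fin.cast hlen idx) ↔ k = idx := by
        rw [finCongr_apply]
        exact ⟨fun hh => Fin.cast_injective hlen hh, fun hh => by rw [hh]⟩
      by_cases hk : k = idx
      · rw [if_pos (hcast.2 hk), if_pos hk]
      · rw [if_neg (fun hh => hk (hcast.1 hh)), if_neg hk]
        have hPk : (C'.get ((finCongr hlen) k)).P j = (C.get k).P j := by
          rw [finCongr_apply, ← (hstoich k).2]
        rw [hPk]
        by_cases hP : 0 < (C.get k).P j
        · rw [finCongr_apply, ← IH k (upstream hP hRj)]
        · rw [Nat.eq_zero_of_not_pos hP]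
          simp
    rw [hsum, ← (hstoich idx).1] at hbal'0
    have hx0 : x 0 j = x' 0 j := by rw [hinit]
    rw [hbal, hbal'0, hx0]
    ring
  -- both steady states exhaust some reactant
  have hxs_nn : ∀ j, 0 ≤ xs j := limit_nonneg hnn hconv
  have hxs'_nn : ∀ j, 0 ≤ xs' j := limit_nonneg hnn' hconv'
  obtain ⟨j0, hj0R, hj0z⟩ : ∃ j, 0 < (C.get idx).R j ∧ xs j = 0 :=
    ((hwf _ (hmem idx)).2.2.2 xs hxs_nn).1 (steady_rates_zero hwf hfun hss idx)
  obtain ⟨j1, hj1R', hj1z⟩ : ∃ j, 0 < (C'.get (Fin.cast hlen idx)).R j ∧ xs' j = 0 :=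
    ((hwf' _ (hmem' (Fin.cast hlen idx))).2.2.2 xs' hxs'_nn).1
      (steady_rates_zero hwf' hfun' hss' (Fin.cast hlen idx))
  have hj1R : 0 < (C.get idx).R j1 := by rw [(hstoich idx).1]; exact hj1R'
  have k0 := key j0 hj0R
  have k1 := key j1 hj1R
  rw [hj0z] at k0
  rw [hj1z] at k1
  have hc0 : (0:ℝ) < ((C.get idx).R j0 : ℝ) := by exact_mod_cast hj0R
  have hc1 : (0:ℝ) < ((C.get idx).R j1 : ℝ) := by exact_mod_cast hj1R
  have hle : F' idx ≤ F idx := by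
    have : 0 ≤ ((C.get idx).R j0 : ℝ) * F idx - ((C.get idx).R j0 : ℝ) * F' idx := by
      rw [k0]; simpa using hxs'_nn j0
    nlinarith
  have hge : F idx ≤ F' idx := by
    have : ((C.get idx).R j1 : ℝ) * F idx - ((C.get idx).R j1 : ℝ) * F' idx ≤ 0 := by
      rw [k1]; simpa using hxs_nn j1
    nlinarith
  linarith

end FunnelProof
/-- For a well-formed funnel CRN, along a nonnegative solution
converging to a steady state, the total amount
`xᵢ⁺ = xᵢ(0) + ∫₀^∞ (production rate of i)` of every species is finite and
depends only on the stoichiometry and the initial state, not on the rate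
functions. -/
theorem funnel_total_amount_rate_independent {n : ℕ} (C C' : CRN n)
    (hwf : WellFormed C) (hwf' : WellFormed C')
    (hfun : Funnel C) (hfun' : Funnel C')
    (hlen : C.length = C'.length)
    (hstoich : ∀ i : Fin C.length,
      (C.get i).R = (C'.get (Fin.cast hlen i)).R ∧
      (C.get i).P = (C'.get (Fin.cast hlen i)).P)
    (x x' : ℝ → Fin n → ℝ) (x0 : Fin n → ℝ) (hx0nn : ∀ j, 0 ≤ x0 j)
    (hinit : x 0 = x0) (hinit' : x' 0 = x0)
    (hsol : IsSolution C x) (hnn : NonnegSol x)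
    (hsol' : IsSolution C' x') (hnn' : NonnegSol x')
    (hconv : ∃ xs : Fin n → ℝ, SteadyState C xs ∧
      Filter.Tendsto x Filter.atTop (nhds xs))
    (hconv' : ∃ xs' : Fin n → ℝ, SteadyState C' xs' ∧
      Filter.Tendsto x' Filter.atTop (nhds xs')) :
    (∀ i : Fin n, IntegrableOn (productionRate C x i) (Set.Ici (0 : ℝ))) ∧
    (∀ i : Fin n, IntegrableOn (productionRate C' x' i) (Set.Ici (0 : ℝ))) ∧
    (∀ i : Fin n,
      x0 i + ∫ t in Set.Ici (0 : ℝ), productionRate C x i t =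
      x0 i + ∫ t in Set.Ici (0 : ℝ), productionRate C' x' i t) := by
  obtain ⟨xs, hss, hcv⟩ := hconv
  obtain ⟨xs', hss', hcv'⟩ := hconv'
  have hint := FunnelProof.integrable_rates hwf hfun hsol hnn
  have hint' := FunnelProof.integrable_rates hwf' hfun' hsol' hnn'
  have hFeq := FunnelProof.integral_rate_eq hwf hwf' hfun hfun' hlen hstoich hsol hnn hsol' hnn'
    (by rw [hinit, hinit']) hss hcv hss' hcv'
  have hprod : ∀ i : Fin n, IntegrableOn (productionRate C x i) (Set.Ici (0:ℝ)) := by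
    intro i
    have hPRdef : productionRate C x i = fun t => ∑ idx : Fin C.length,
        (if (C.get idx).R i < (C.get idx).P i then
          (((C.get idx).P i : ℝ) - ((C.get idx).R i : ℝ)) * (C.get idx).f (x t) else 0) := rfl
    rw [hPRdef]
    apply MeasureTheory.integrable_finset_sum
    intro idx _
    by_cases hcond : (C.get idx).R i < (C.get idx).P i
    · simp only [if_pos hcond]
      exact (hint idx).const_mul _
    · simp only [if_neg hcond]
      exact integrable_zero _ _ _
  have hprod' : ∀ i : Fin n, IntegrableOn (productionRate C' x' i) (Set.Ici (0:ℝ)) := by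
    intro i
    have hPRdef : productionRate C' x' i = fun t => ∑ idx : Fin C'.length,
        (if (C'.get idx).R i < (C'.get idx).P i then
          (((C'.get idx).P i : ℝ) - ((C'.get idx).R i : ℝ)) * (C'.get idx).f (x' t) else 0) := rfl
    rw [hPRdef]
    apply MeasureTheory.integrable_finset_sum
    intro idx _
    by_cases hcond : (C'.get idx).R i < (C'.get idx).P i
    · simp only [if_pos hcond]
      exact (hint' idx).const_mul _
    · simp only [if_neg hcond]
      exact integrable_zero _ _ _
  refine ⟨hprod, hprod', fun i => ?_⟩
  have e1 : ∫ t in Set.Ici (0:ℝ), productionRate C x i t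
      = ∑ idx : Fin C.length, (if (C.get idx).R i < (C.get idx).P i then
          (((C.get idx).P i : ℝ) - ((C.get idx).R i : ℝ)) *
            ∫ t in Set.Ici (0:ℝ), (C.get idx).f (x t) else 0) := by
    simp only [productionRate]
    rw [MeasureTheory.integral_finset_sum]
    · refine Finset.sum_congr rfl fun idx _ => ?_
      by_cases hcond : (C.get idx).R i < (C.get idx).P i
      · simp only [if_pos hcond]
        exact MeasureTheory.integral_const_mul _ _
      · simp only [if_neg hcond]
        simp
    · intro idx _
      by_cases hcond : (C.get idx).R i < (C.get idx).P i
      · simp only [if_pos hcond]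
        exact (hint idx).const_mul _
      · simp only [if_neg hcond]
        exact integrable_zero _ _ _
  have e1' : ∫ t in Set.Ici (0:ℝ), productionRate C' x' i t
      = ∑ idx : Fin C'.length, (if (C'.get idx).R i < (C'.get idx).P i then
          (((C'.get idx).P i : ℝ) - ((C'.get idx).R i : ℝ)) *
            ∫ t in Set.Ici (0:ℝ), (C'.get idx).f (x' t) else 0) := by
    simp only [productionRate]
    rw [MeasureTheory.integral_finset_sum]
    · refine Finset.sum_congr rfl fun idx _ => ?_
      by_cases hcond : (C'.get idx).R i < (C'.get idx).P i
      · simp only [if_pos hcond]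
        exact MeasureTheory.integral_const_mul _ _
      · simp only [if_neg hcond]
        simp
    · intro idx _
      by_cases hcond : (C'.get idx).R i < (C'.get idx).P i
      · simp only [if_pos hcond]
        exact (hint' idx).const_mul _
      · simp only [if_neg hcond]
        exact integrable_zero _ _ _
  rw [e1, e1']
  congr 1
  refine Fintype.sum_equiv (finCongr hlen) _ _ fun idx => ?_
  rw [finCongr_apply]
  have hRi := congrFun (hstoich idx).1 i
  have hPi := congrFun (hstoich idx).2 i
  rw [← hRi, ← hPi, ← hFeq idx]
end

section
/- Consider the mass-action CRN consisting of the single reaction a + b → c with rate constant k > 0, i.e., the ODE system a′ = −k·a·b, b′ = −k·a·b, c′ = k·a·b. For any initial values a(0) = a₀ ≥ 0, b(0) = b₀ ≥ 0, c(0) = c₀ ≥ 0 and any k > 0, every solution defined on [0,∞) satisfies a(t) → max(0, a₀ − b₀), b(t) → max(0, b₀ − a₀), and c(t) → c₀ + min(a₀, b₀) as t → ∞. In particular the limits are independent of k: the CRN computes the minimum of a₀ and b₀ on c, rate-independently. -/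
open Filter Topology

/-- A solution of `f' = g·f` on `[0,∞)` with `f 0 ≥ 0` stays nonnegative. -/
lemma crn_ode_nonneg (f g : ℝ → ℝ) (hf0 : 0 ≤ f 0)
    (hg : ∀ t : ℝ, 0 ≤ t → ContinuousAt g t)
    (hd : ∀ t : ℝ, 0 ≤ t → HasDerivAt f (g t * f t) t) :
    ∀ t : ℝ, 0 ≤ t → 0 ≤ f t := by
  intro t₁ ht₁
  by_contra hneg
  push_neg at hneg
  have hfC : ContinuousOn f (Set.Icc 0 t₁) := fun x hx =>
    ((hd x hx.1).continuousAt).continuousWithinAt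
  have h0mem : (0 : ℝ) ∈ Set.Icc (f t₁) (f 0) := ⟨le_of_lt hneg, hf0⟩
  obtain ⟨z, hz, hfz⟩ := intermediate_value_Icc' ht₁ hfC h0mem
  have hz0 : (0 : ℝ) ≤ z := hz.1
  -- bound g on [z, t₁]
  have hgC : ContinuousOn g (Set.Icc z t₁) := fun x hx =>
    (hg x (le_trans hz0 hx.1)).continuousWithinAt
  obtain ⟨C, hC⟩ := (isCompact_Icc (a := z) (b := t₁)).exists_bound_of_continuousOn hgC
  -- Grönwall on [z, t₁]
  have hfC' : ContinuousOn f (Set.Icc z t₁) := fun x hx =>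
    ((hd x (le_trans hz0 hx.1)).continuousAt).continuousWithinAt
  have hder : ∀ x ∈ Set.Ico z t₁, HasDerivWithinAt f (g x * f x) (Set.Ici x) x := fun x hx =>
    (hd x (le_trans hz0 hx.1)).hasDerivWithinAt
  have hstart : ‖f z‖ ≤ 0 := by simp [hfz]
  have hbound : ∀ x ∈ Set.Ico z t₁, ‖g x * f x‖ ≤ C * ‖f x‖ + 0 := by
    intro x hx
    rw [norm_mul, add_zero]
    exact mul_le_mul_of_nonneg_right (hC x ⟨hx.1, hx.2.le⟩) (norm_nonneg _)
  have := norm_le_gronwallBound_of_norm_deriv_right_le hfC' hder hstart hbound t₁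
    ⟨hz.2, le_rfl⟩
  rw [gronwallBound_ε0_δ0] at this
  have : f t₁ = 0 := by simpa [norm_le_zero_iff] using this
  linarith

/-- A function with vanishing derivative on `[0,∞)` is constant there. -/
lemma crn_ode_const (f : ℝ → ℝ) (hd : ∀ t : ℝ, 0 ≤ t → HasDerivAt f 0 t) :
    ∀ t : ℝ, 0 ≤ t → f t = f 0 := by
  intro t ht
  have hc : ContinuousOn f (Set.Icc 0 t) := fun x hx =>
    ((hd x hx.1).continuousAt).continuousWithinAt
  exact constant_of_has_deriv_right_zero hc
    (fun x hx => (hd x hx.1).hasDerivWithinAt) t ⟨ht, le_rfl⟩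

/-- A nonnegative function antitone on `[0,∞)` converges to a limit `L ≥ 0`
which bounds it from below. -/
lemma crn_anti_tendsto (f : ℝ → ℝ) (hnn : ∀ t : ℝ, 0 ≤ t → 0 ≤ f t)
    (hanti : AntitoneOn f (Set.Ici 0)) :
    ∃ L : ℝ, 0 ≤ L ∧ (∀ t : ℝ, 0 ≤ t → L ≤ f t) ∧ Tendsto f atTop (𝓝 L) := by
  set F : ℝ → ℝ := fun t => f (max t 0) with hF
  have hFanti : Antitone F := fun s t hst =>
    hanti (le_max_right s 0) (le_max_right t 0) (max_le_max hst le_rfl)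
  have hbdd : BddBelow (Set.range F) := by
    refine ⟨0, ?_⟩
    rintro y ⟨t, rfl⟩
    exact hnn _ (le_max_right t 0)
  have hT : Tendsto F atTop (𝓝 (⨅ t, F t)) := tendsto_atTop_ciInf hFanti hbdd
  have heq : F =ᶠ[atTop] f := by
    filter_upwards [eventually_ge_atTop (0 : ℝ)] with t ht
    simp [hF, max_eq_left ht]
  have hTf : Tendsto f atTop (𝓝 (⨅ t, F t)) := hT.congr' heq
  refine ⟨⨅ t, F t, ?_, ?_, hTf⟩
  · refine ge_of_tendsto hTf ?_
    filter_upwards [eventually_ge_atTop (0 : ℝ)] with s hs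
    exact hnn s hs
  · intro t ht
    refine le_of_tendsto hTf ?_
    filter_upwards [eventually_ge_atTop t] with s hs
    exact hanti ht (le_trans ht hs) hs

/-- The mass-action CRN `a + b → c` computes `min(a₀,b₀)` on
`c`, rate-independently: for any rate constant `k > 0` and nonnegative initial
values, every solution on `[0,∞)` satisfies `a(t) → max 0 (a₀ − b₀)`,
`b(t) → max 0 (b₀ − a₀)` and `c(t) → c₀ + min a₀ b₀`. -/
theorem min_crn_rate_independent (k a₀ b₀ c₀ : ℝ)
    (hk : 0 < k) (ha₀ : 0 ≤ a₀) (hb₀ : 0 ≤ b₀) (hc₀ : 0 ≤ c₀)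
    (a b c : ℝ → ℝ)
    (ha0 : a 0 = a₀) (hb0 : b 0 = b₀) (hc0 : c 0 = c₀)
    (hda : ∀ t : ℝ, 0 ≤ t → HasDerivAt a (-(k * a t * b t)) t)
    (hdb : ∀ t : ℝ, 0 ≤ t → HasDerivAt b (-(k * a t * b t)) t)
    (hdc : ∀ t : ℝ, 0 ≤ t → HasDerivAt c (k * a t * b t) t) :
    Tendsto a atTop (nhds (max 0 (a₀ - b₀))) ∧
    Tendsto b atTop (nhds (max 0 (b₀ - a₀))) ∧
    Tendsto c atTop (nhds (c₀ + min a₀ b₀)) := by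
  have hca : ∀ t : ℝ, 0 ≤ t → ContinuousAt a t := fun t ht => (hda t ht).continuousAt
  have hcb : ∀ t : ℝ, 0 ≤ t → ContinuousAt b t := fun t ht => (hdb t ht).continuousAt
  -- nonnegativity
  have hna : ∀ t : ℝ, 0 ≤ t → 0 ≤ a t := by
    refine crn_ode_nonneg a (fun t => -(k * b t)) (ha0 ▸ ha₀)
      (fun t ht => (continuousAt_const.mul (hcb t ht)).neg) (fun t ht => ?_)
    convert hda t ht using 1; ring
  have hnb : ∀ t : ℝ, 0 ≤ t → 0 ≤ b t := by
    refine crn_ode_nonneg b (fun t => -(k * a t)) (hb0 ▸ hb₀)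
      (fun t ht => (continuousAt_const.mul (hca t ht)).neg) (fun t ht => ?_)
    convert hdb t ht using 1; ring
  -- a and b are antitone on [0,∞)
  have hantiAux : ∀ f : ℝ → ℝ, (∀ t : ℝ, 0 ≤ t → HasDerivAt f (-(k * a t * b t)) t) →
      AntitoneOn f (Set.Ici (0 : ℝ)) := by
    intro f hdf
    refine antitoneOn_of_deriv_nonpos (convex_Ici 0)
      (fun x hx => ((hdf x hx).continuousAt).continuousWithinAt) ?_ ?_
    · intro x hx
      rw [interior_Ici] at hx
      exact ((hdf x (le_of_lt hx)).differentiableAt).differentiableWithinAt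
    · intro x hx
      rw [interior_Ici] at hx
      rw [(hdf x (le_of_lt hx)).deriv]
      have := mul_nonneg (mul_nonneg hk.le (hna x (le_of_lt hx))) (hnb x (le_of_lt hx))
      linarith
  have hantia : AntitoneOn a (Set.Ici 0) := hantiAux a hda
  have hantib : AntitoneOn b (Set.Ici 0) := hantiAux b hdb
  -- limits
  obtain ⟨L, hL0, hLle, hLa⟩ := crn_anti_tendsto a hna hantia
  obtain ⟨M, hM0, hMle, hMb⟩ := crn_anti_tendsto b hnb hantib
  -- conservation: a - b constant
  have hconst : ∀ t : ℝ, 0 ≤ t → a t - b t = a₀ - b₀ := by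
    intro t ht
    have := crn_ode_const (fun s => a s - b s)
      (fun s hs => by have h := (hda s hs).sub (hdb s hs); simp at h; exact h) t ht
    simpa [ha0, hb0] using this
  -- conservation: a + c constant
  have hconst2 : ∀ t : ℝ, 0 ≤ t → a t + c t = a₀ + c₀ := by
    intro t ht
    have := crn_ode_const (fun s => a s + c s)
      (fun s hs => by have h := (hda s hs).add (hdc s hs); simp at h; exact h) t ht
    simpa [ha0, hc0] using this
  -- relation between the limits
  have hMeq : M = L - (a₀ - b₀) := by
    refine tendsto_nhds_unique hMb ?_
    have : Tendsto (fun t => a t - (a₀ - b₀)) atTop (𝓝 (L - (a₀ - b₀))) :=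
      hLa.sub_const _
    refine this.congr' ?_
    filter_upwards [eventually_ge_atTop (0 : ℝ)] with t ht
    have := hconst t ht; linarith
  -- the product of the limits vanishes
  have hLM : L * M = 0 := by
    by_contra h
    have hpos : 0 < L * M := lt_of_le_of_ne (mul_nonneg hL0 hM0) (Ne.symm h)
    have hkpos : 0 < k * (L * M) := mul_pos hk hpos
    -- φ t = a t + k L M t is antitone on [0,∞)
    have hφ : AntitoneOn (fun t => a t + k * (L * M) * t) (Set.Ici (0 : ℝ)) := by
      refine antitoneOn_of_deriv_nonpos (convex_Ici 0) ?_ ?_ ?_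
      · intro x hx
        exact (((hda x hx).continuousAt).add
          ((continuous_const.mul continuous_id).continuousAt)).continuousWithinAt
      · intro x hx
        rw [interior_Ici] at hx
        exact (((hda x (le_of_lt hx)).differentiableAt).add
          ((differentiable_const _).mul differentiable_id x)).differentiableWithinAt
      · intro x hx
        rw [interior_Ici] at hx
        have hx0 : (0 : ℝ) ≤ x := le_of_lt hx
        have hd' : HasDerivAt (fun t => a t + k * (L * M) * t)
            (-(k * a x * b x) + k * (L * M)) x := by
          have h := (hda x hx0).add ((hasDerivAt_id x).const_mul (k * (L * M)))
          simp only [mul_one] at h; exact h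
        rw [hd'.deriv]
        have hab : L * M ≤ a x * b x :=
          mul_le_mul (hLle x hx0) (hMle x hx0) hM0 (hna x hx0)
        nlinarith
    set T : ℝ := (a 0 + 1) / (k * (L * M)) with hT
    have hT0 : 0 ≤ T := by
      apply div_nonneg _ hkpos.le
      have : 0 ≤ a 0 := ha0 ▸ ha₀
      linarith
    have := hφ (Set.self_mem_Ici) (Set.mem_Ici.2 hT0) hT0
    have hmul : k * (L * M) * T = a 0 + 1 := by
      rw [hT, mul_div_cancel₀]
      exact ne_of_gt hkpos
    have : a T ≤ -1 := by simp only [mul_zero, add_zero] at this; linarith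
    have := hna T hT0
    linarith
  -- identify the limits
  have hLval : L = max 0 (a₀ - b₀) := by
    rcases mul_eq_zero.1 hLM with h | h
    · have hle : a₀ - b₀ ≤ 0 := by rw [h] at hMeq; linarith
      rw [h, max_eq_left hle]
    · have hLeq : L = a₀ - b₀ := by rw [h] at hMeq; linarith
      rw [hLeq, max_eq_right (hLeq ▸ hL0)]
  have hMval : M = max 0 (b₀ - a₀) := by
    rcases mul_eq_zero.1 hLM with h | h
    · have hMeq' : M = b₀ - a₀ := by rw [h] at hMeq; linarith
      rw [hMeq', max_eq_right (hMeq' ▸ hM0)]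
    · have hle : b₀ - a₀ ≤ 0 := by rw [h] at hMeq; linarith [hL0]
      rw [h, max_eq_left hle]
  -- limit of c
  have hc : Tendsto c atTop (𝓝 (a₀ + c₀ - L)) := by
    have : Tendsto (fun t => a₀ + c₀ - a t) atTop (𝓝 (a₀ + c₀ - L)) :=
      tendsto_const_nhds.sub hLa
    refine this.congr' ?_
    filter_upwards [eventually_ge_atTop (0 : ℝ)] with t ht
    have := hconst2 t ht; linarith
  have hcval : a₀ + c₀ - L = c₀ + min a₀ b₀ := by
    rw [hLval]
    rcases le_total a₀ b₀ with h | h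
    · rw [max_eq_left (by linarith), min_eq_left h]; ring
    · rw [max_eq_right (by linarith), min_eq_right h]; ring
  exact ⟨hLval ▸ hLa, hMval ▸ hMb, hcval ▸ hc⟩
end

section
/- Consider the mass-action CRN with reactions a → x + c, b → y + c, x + y → z, c + z → r with rate constants k₁, k₂, k₃, k₄ > 0, i.e., the ODE system a′ = −k₁a, b′ = −k₂b, c′ = k₁a + k₂b − k₄cz, r′ = k₄cz, x′ = k₁a − k₃xy, y′ = k₂b − k₃xy, z′ = k₃xy − k₄cz. For any initial values a(0) = a₀ ≥ 0, b(0) = b₀ ≥ 0 and x(0) = y(0) = c(0) = z(0) = r(0) = 0, and any k₁, k₂, k₃, k₄ > 0, every solution defined on [0,∞) satisfies, as t → ∞: a(t) → 0, b(t) → 0, c(t) → max(a₀, b₀), r(t) → min(a₀, b₀), x(t) → max(0, a₀ − b₀), y(t) → max(0, b₀ − a₀), z(t) → 0. In particular the limits are independent of the rate constants: the CRN computes the maximum of a₀ and b₀ on c, rate-independently. -/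
open Filter Topology Set

section CRNHelpers

/-- extension of a function continuous on `[0,∞)` to a continuous function. -/
lemma crn_cont_ext (f : ℝ → ℝ) (hf : ∀ t, 0 ≤ t → ContinuousAt f t) :
    Continuous (fun t => f (max t 0)) := by
  rw [continuous_iff_continuousAt]
  intro t
  have hmax : Continuous (fun s : ℝ => max s 0) := continuous_id.max continuous_const
  show ContinuousAt (f ∘ fun s => max s 0) t
  exact ContinuousAt.comp (hf (max t 0) (le_max_right _ _)) hmax.continuousAt

lemma crn_primitive_hasDerivAt (g : ℝ → ℝ) (hg : Continuous g) (t : ℝ) :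
    HasDerivAt (fun u => ∫ s in (0:ℝ)..u, g s) (g t) t :=
  intervalIntegral.integral_hasDerivAt_right (hg.intervalIntegrable 0 t)
    (hg.stronglyMeasurableAtFilter _ _) hg.continuousAt

/-- monotone on `Ici 0` from nonneg derivative there -/
lemma crn_monoOn (F f : ℝ → ℝ) (hd : ∀ t, 0 ≤ t → HasDerivAt F (f t) t)
    (hf : ∀ t, 0 ≤ t → 0 ≤ f t) : MonotoneOn F (Ici (0:ℝ)) := by
  apply monotoneOn_of_deriv_nonneg (convex_Ici 0)
  · intro s hs; exact ((hd s hs).continuousAt).continuousWithinAt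
  · intro s hs
    rw [interior_Ici] at hs
    exact ((hd s hs.le).differentiableAt).differentiableWithinAt
  · intro s hs
    rw [interior_Ici] at hs
    rw [(hd s hs.le).deriv]
    exact hf s hs.le

lemma crn_const (F : ℝ → ℝ) (hd : ∀ t, 0 ≤ t → HasDerivAt F 0 t) :
    ∀ t, 0 ≤ t → F t = F 0 := by
  intro t ht
  have h1 : ContinuousOn F (Icc 0 t) := fun s hs => ((hd s hs.1).continuousAt).continuousWithinAt
  have h2 : ∀ s ∈ Ico (0:ℝ) t, HasDerivWithinAt F 0 (Ici s) s := fun s hs =>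
    (hd s hs.1).hasDerivWithinAt
  exact constant_of_has_deriv_right_zero h1 h2 t ⟨ht, le_refl t⟩

/-- integrating factor nonnegativity: if `v 0 = 0` and `v' = h - g·v` with `h ≥ 0`,
then `v ≥ 0` on `[0,∞)`. `g` is assumed globally continuous. -/
lemma crn_nonneg (v g h : ℝ → ℝ) (hg : Continuous g) (hv0 : v 0 = 0)
    (hh : ∀ t, 0 ≤ t → 0 ≤ h t)
    (hd : ∀ t, 0 ≤ t → HasDerivAt v (h t - g t * v t) t) :
    ∀ t, 0 ≤ t → 0 ≤ v t := by
  set G : ℝ → ℝ := fun u => ∫ s in (0:ℝ)..u, g s with hG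
  have hGd : ∀ t : ℝ, HasDerivAt G (g t) t := crn_primitive_hasDerivAt g hg
  set w : ℝ → ℝ := fun t => v t * Real.exp (G t) with hw
  have hwd : ∀ t, 0 ≤ t → HasDerivAt w (h t * Real.exp (G t)) t := by
    intro t ht
    have := (hd t ht).mul ((hGd t).exp)
    exact this.congr_deriv (by ring)
  have hmono : MonotoneOn w (Ici (0:ℝ)) :=
    crn_monoOn w (fun t => h t * Real.exp (G t)) hwd
      (fun t ht => mul_nonneg (hh t ht) (Real.exp_pos _).le)
  intro t ht
  have h0 : w 0 = 0 := by simp [hw, hv0]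
  have : w 0 ≤ w t := hmono (self_mem_Ici) ht ht
  rw [h0] at this
  exact (mul_nonneg_iff_of_pos_right (Real.exp_pos (G t))).mp this

/-- Barbalat-type lemma. -/
lemma crn_barbalat (F f : ℝ → ℝ) (M B : ℝ) (hM : 0 < M)
    (hd : ∀ t, 0 ≤ t → HasDerivAt F (f t) t)
    (hf0 : ∀ t, 0 ≤ t → 0 ≤ f t)
    (hFB : ∀ t, 0 ≤ t → F t ≤ B)
    (hLip : ∀ s t, 0 ≤ s → 0 ≤ t → |f s - f t| ≤ M * |s - t|) :
    Tendsto f atTop (𝓝 0) := by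
  have hFmono : MonotoneOn F (Ici (0:ℝ)) := crn_monoOn F f hd hf0
  set G : ℝ → ℝ := fun t => F (max t 0) with hGdef
  have hGmono : Monotone G := fun s t hst =>
    hFmono (mem_Ici.mpr (le_max_right _ _)) (mem_Ici.mpr (le_max_right _ _)) (max_le_max hst le_rfl)
  have hGbdd : BddAbove (Set.range G) := by
    refine ⟨B, ?_⟩
    rintro _ ⟨t, rfl⟩
    exact hFB _ (le_max_right _ _)
  set ℓ : ℝ := ⨆ t, G t with hl
  have hGten : Tendsto G atTop (𝓝 ℓ) := tendsto_atTop_ciSup hGmono hGbdd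
  have hGle : ∀ t, G t ≤ ℓ := fun t => le_ciSup hGbdd t
  rw [Metric.tendsto_atTop]
  intro ε hε
  set δ : ℝ := ε / (2 * M) with hδ
  have hδpos : 0 < δ := div_pos hε (by positivity)
  have hεδ : 0 < ε * δ / 4 := by positivity
  obtain ⟨T₀, hT₀⟩ := (Metric.tendsto_atTop.mp hGten) (ε * δ / 4) hεδ
  refine ⟨max T₀ 0, fun t ht => ?_⟩
  have ht0 : 0 ≤ t := le_trans (le_max_right _ _) ht
  have htT : T₀ ≤ t := le_trans (le_max_left _ _) ht
  rw [Real.dist_eq, sub_zero, abs_of_nonneg (hf0 t ht0)]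
  by_contra hcon
  push_neg at hcon
  -- f ≥ ε/2 on [t, t+δ]
  have hfs : ∀ s ∈ Icc t (t + δ), ε / 2 ≤ f s := by
    intro s hs
    have habs := abs_le.mp (hLip s t (ht0.trans hs.1) ht0)
    have hst : |s - t| = s - t := abs_of_nonneg (by linarith [hs.1])
    rw [hst] at habs
    have h2 : M * (s - t) ≤ M * δ :=
      mul_le_mul_of_nonneg_left (by linarith [hs.2]) hM.le
    have h3 : M * δ = ε / 2 := by
      field_simp [hδ]; rw [hδ]; field_simp
    linarith [habs.1]
  -- F increases by at least ε/2 * δ on [t, t+δ]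
  have hincr : ε / 2 * δ ≤ F (t + δ) - F t := by
    set φ : ℝ → ℝ := fun s => F s - ε / 2 * s with hφ
    have hφmono : MonotoneOn φ (Icc t (t + δ)) := by
      apply monotoneOn_of_deriv_nonneg (convex_Icc _ _)
      · intro s hs
        exact (((hd s (ht0.trans hs.1)).sub
          ((hasDerivAt_id s).const_mul (ε/2))).continuousAt).continuousWithinAt
      · intro s hs
        rw [interior_Icc] at hs
        exact (((hd s (ht0.trans hs.1.le)).sub
          ((hasDerivAt_id s).const_mul (ε/2))).differentiableAt).differentiableWithinAt
      · intro s hs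
        rw [interior_Icc] at hs
        have hds : HasDerivAt φ (f s - ε/2 * 1) s :=
          (hd s (ht0.trans hs.1.le)).sub ((hasDerivAt_id s).const_mul (ε/2))
        rw [hds.deriv]
        have := hfs s ⟨hs.1.le, hs.2.le⟩
        linarith
    have := hφmono (left_mem_Icc.mpr (by linarith)) (right_mem_Icc.mpr (by linarith)) (by linarith)
    simp only [hφ] at this
    linarith
  -- but F t is within ε δ/4 of ℓ and F (t+δ) ≤ ℓ
  have hFt : ℓ - ε * δ / 4 < F t := by
    have h := hT₀ t htT
    rw [Real.dist_eq] at h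
    have hGt : G t = F t := by simp [hGdef, max_eq_left ht0]
    rw [hGt] at h
    linarith [(abs_lt.mp h).1]
  have hFtd : F (t + δ) ≤ ℓ := by
    have h := hGle (t + δ)
    simp only [hGdef, max_eq_left (show (0:ℝ) ≤ t + δ by linarith)] at h
    exact h
  have hh : ε / 2 * δ = ε * δ / 4 + ε * δ / 4 := by ring
  linarith

lemma crn_lim_max (x y : ℝ → ℝ) (C L : ℝ)
    (hx0 : ∀ᶠ t in atTop, 0 ≤ x t) (hxC : ∀ᶠ t in atTop, x t ≤ C)
    (hy0 : ∀ᶠ t in atTop, 0 ≤ y t)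
    (hsub : Tendsto (fun t => x t - y t) atTop (𝓝 L))
    (hmul : Tendsto (fun t => x t * y t) atTop (𝓝 0)) :
    Tendsto x atTop (𝓝 (max L 0)) := by
  rcases lt_trichotomy L 0 with hL | hL | hL
  · -- L < 0 : x → 0
    rw [max_eq_right hL.le]
    have hev : ∀ᶠ t in atTop, x t - y t < L / 2 :=
      hsub.eventually (eventually_lt_nhds (by linarith))
    have hyge : ∀ᶠ t in atTop, -L / 2 ≤ y t := by
      filter_upwards [hev, hx0] with t h1 h2
      linarith
    have hub : ∀ᶠ t in atTop, x t ≤ 2 / (-L) * (x t * y t) := by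
      filter_upwards [hyge, hx0] with t h1 h2
      have h3 : x t * (-L / 2) ≤ x t * y t := mul_le_mul_of_nonneg_left h1 h2
      rw [div_mul_eq_mul_div, le_div_iff₀ (by linarith : (0:ℝ) < -L)]
      nlinarith
    have hlim : Tendsto (fun t => 2 / (-L) * (x t * y t)) atTop (𝓝 0) := by
      have := hmul.const_mul (2 / (-L))
      simpa using this
    exact tendsto_of_tendsto_of_tendsto_of_le_of_le' tendsto_const_nhds hlim hx0 hub
  · -- L = 0 : x → 0 via x ≤ sqrt (C'|x-y| + |xy|)
    subst hL
    rw [max_self]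
    set C' : ℝ := max C 0 with hC'
    set u : ℝ → ℝ := fun t => C' * |x t - y t| + |x t * y t| with hu
    have huten : Tendsto u atTop (𝓝 0) := by
      have h1 : Tendsto (fun t => |x t - y t|) atTop (𝓝 0) := by
        simpa using hsub.abs
      have h2 : Tendsto (fun t => |x t * y t|) atTop (𝓝 0) := by
        simpa using hmul.abs
      simpa [hu, abs_mul] using (h1.const_mul C').add h2
    have hsq : Tendsto (fun t => Real.sqrt (u t)) atTop (𝓝 0) := by
      have := (Real.continuous_sqrt.tendsto 0).comp huten
      simpa [Function.comp_def] using this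
    have hub : ∀ᶠ t in atTop, x t ≤ Real.sqrt (u t) := by
      filter_upwards [hx0, hxC] with t h1 h2
      have hx2 : x t ^ 2 ≤ u t := by
        have e1 : x t ^ 2 = x t * (x t - y t) + x t * y t := by ring
        have e2 : x t * (x t - y t) ≤ C' * |x t - y t| := by
          calc x t * (x t - y t) ≤ x t * |x t - y t| :=
                mul_le_mul_of_nonneg_left (le_abs_self _) h1
            _ ≤ C' * |x t - y t| :=
                mul_le_mul_of_nonneg_right (le_trans h2 (le_max_left _ _)) (abs_nonneg _)
        have e3 : x t * y t ≤ |x t * y t| := le_abs_self _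
        rw [e1, hu]; exact add_le_add e2 e3
      calc x t = Real.sqrt (x t ^ 2) := (Real.sqrt_sq h1).symm
        _ ≤ Real.sqrt (u t) := Real.sqrt_le_sqrt hx2
    exact tendsto_of_tendsto_of_tendsto_of_le_of_le' tendsto_const_nhds hsq hx0 hub
  · -- L > 0 : y → 0 and x = (x - y) + y → L
    rw [max_eq_left hL.le]
    have hev : ∀ᶠ t in atTop, L / 2 < x t - y t :=
      hsub.eventually (eventually_gt_nhds (by linarith))
    have hxge : ∀ᶠ t in atTop, L / 2 ≤ x t := by
      filter_upwards [hev, hy0] with t h1 h2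
      linarith
    have hub : ∀ᶠ t in atTop, y t ≤ 2 / L * (x t * y t) := by
      filter_upwards [hxge, hy0] with t h1 h2
      have h3 : y t * (L / 2) ≤ y t * x t := mul_le_mul_of_nonneg_left h1 h2
      rw [div_mul_eq_mul_div, le_div_iff₀ hL]
      nlinarith
    have hylim : Tendsto y atTop (𝓝 0) := by
      have hlim : Tendsto (fun t => 2 / L * (x t * y t)) atTop (𝓝 0) := by
        have := hmul.const_mul (2 / L)
        simpa using this
      exact tendsto_of_tendsto_of_tendsto_of_le_of_le' tendsto_const_nhds hlim hy0 hub
    have := hsub.add hylim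
    rw [add_zero] at this
    exact this.congr (fun t => by ring)

/-- explicit solution of the linear decay equation on `[0,∞)`. -/
lemma crn_decay (k v₀ : ℝ) (v : ℝ → ℝ) (hv0 : v 0 = v₀)
    (hd : ∀ t, 0 ≤ t → HasDerivAt v (-(k * v t)) t) :
    ∀ t, 0 ≤ t → v t = v₀ * Real.exp (-(k * t)) := by
  have hd0 : ∀ t, 0 ≤ t → HasDerivAt (fun s => v s * Real.exp (k * s)) 0 t := by
    intro t ht
    have h1 := (hd t ht).mul (((hasDerivAt_id t).const_mul k).exp)
    exact h1.congr_deriv (by simp only [id]; ring)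
  intro t ht
  have h := crn_const _ hd0 t ht
  simp only [mul_zero, Real.exp_zero, mul_one, hv0] at h
  have hexp : Real.exp (k * t) ≠ 0 := (Real.exp_pos _).ne'
  have : v₀ * Real.exp (-(k * t)) * Real.exp (k * t) = v₀ := by
    rw [mul_assoc, ← Real.exp_add]
    simp
  apply mul_right_cancel₀ hexp
  rw [h, this]

lemma crn_decay_tendsto (k v₀ : ℝ) (hk : 0 < k) :
    Tendsto (fun t : ℝ => v₀ * Real.exp (-(k * t))) atTop (𝓝 0) := by
  have h1 : Tendsto (fun t : ℝ => k * t) atTop atTop :=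
    Tendsto.const_mul_atTop hk tendsto_id
  have h2 : Tendsto (fun t : ℝ => Real.exp (-(k * t))) atTop (𝓝 0) :=
    Real.tendsto_exp_atBot.comp (tendsto_neg_atTop_atBot.comp h1)
  simpa using h2.const_mul v₀

end CRNHelpers
set_option maxHeartbeats 1000000 in
/-- The mass-action CRN `a → x + c`, `b → y + c`,
`x + y → z`, `c + z → r` computes `max(a₀,b₀)` on `c`, rate-independently:
for any rate constants `k₁,k₂,k₃,k₄ > 0`, initial values `a(0)=a₀ ≥ 0`,
`b(0)=b₀ ≥ 0` and `x(0)=y(0)=c(0)=z(0)=r(0)=0`, every solution on `[0,∞)`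
satisfies `a → 0`, `b → 0`, `c → max a₀ b₀`, `r → min a₀ b₀`,
`x → max 0 (a₀−b₀)`, `y → max 0 (b₀−a₀)`, `z → 0`. -/
theorem max_crn_rate_independent (k₁ k₂ k₃ k₄ a₀ b₀ : ℝ)
    (hk₁ : 0 < k₁) (hk₂ : 0 < k₂) (hk₃ : 0 < k₃) (hk₄ : 0 < k₄)
    (ha₀ : 0 ≤ a₀) (hb₀ : 0 ≤ b₀)
    (a b c r x y z : ℝ → ℝ)
    (ha0 : a 0 = a₀) (hb0 : b 0 = b₀)
    (hc0 : c 0 = 0) (hr0 : r 0 = 0) (hx0 : x 0 = 0) (hy0 : y 0 = 0)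
    (hz0 : z 0 = 0)
    (hda : ∀ t : ℝ, 0 ≤ t → HasDerivAt a (-(k₁ * a t)) t)
    (hdb : ∀ t : ℝ, 0 ≤ t → HasDerivAt b (-(k₂ * b t)) t)
    (hdc : ∀ t : ℝ, 0 ≤ t →
      HasDerivAt c (k₁ * a t + k₂ * b t - k₄ * c t * z t) t)
    (hdr : ∀ t : ℝ, 0 ≤ t → HasDerivAt r (k₄ * c t * z t) t)
    (hdx : ∀ t : ℝ, 0 ≤ t → HasDerivAt x (k₁ * a t - k₃ * x t * y t) t)
    (hdy : ∀ t : ℝ, 0 ≤ t → HasDerivAt y (k₂ * b t - k₃ * x t * y t) t)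
    (hdz : ∀ t : ℝ, 0 ≤ t →
      HasDerivAt z (k₃ * x t * y t - k₄ * c t * z t) t) :
    Tendsto a atTop (nhds 0) ∧
    Tendsto b atTop (nhds 0) ∧
    Tendsto c atTop (nhds (max a₀ b₀)) ∧
    Tendsto r atTop (nhds (min a₀ b₀)) ∧
    Tendsto x atTop (nhds (max 0 (a₀ - b₀))) ∧
    Tendsto y atTop (nhds (max 0 (b₀ - a₀))) ∧
    Tendsto z atTop (nhds 0) := by
  
  -- continuity of each variable on [0,∞)
  have hCa : ∀ t, 0 ≤ t → ContinuousAt a t := fun t ht => (hda t ht).continuousAt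
  have hCb : ∀ t, 0 ≤ t → ContinuousAt b t := fun t ht => (hdb t ht).continuousAt
  have hCc : ∀ t, 0 ≤ t → ContinuousAt c t := fun t ht => (hdc t ht).continuousAt
  have hCx : ∀ t, 0 ≤ t → ContinuousAt x t := fun t ht => (hdx t ht).continuousAt
  have hCy : ∀ t, 0 ≤ t → ContinuousAt y t := fun t ht => (hdy t ht).continuousAt
  have hCz : ∀ t, 0 ≤ t → ContinuousAt z t := fun t ht => (hdz t ht).continuousAt
  -- explicit formulas for a and b
  have hAe : ∀ t, 0 ≤ t → a t = a₀ * Real.exp (-(k₁ * t)) := crn_decay k₁ a₀ a ha0 hda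
  have hBe : ∀ t, 0 ≤ t → b t = b₀ * Real.exp (-(k₂ * t)) := crn_decay k₂ b₀ b hb0 hdb
  have haNN : ∀ t, 0 ≤ t → 0 ≤ a t := by
    intro t ht; rw [hAe t ht]; positivity
  have hbNN : ∀ t, 0 ≤ t → 0 ≤ b t := by
    intro t ht; rw [hBe t ht]; positivity
  have haLe : ∀ t, 0 ≤ t → a t ≤ a₀ := by
    intro t ht; rw [hAe t ht]
    have h1 : Real.exp (-(k₁ * t)) ≤ 1 := Real.exp_le_one_iff.mpr (by nlinarith)
    nlinarith
  have hbLe : ∀ t, 0 ≤ t → b t ≤ b₀ := by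
    intro t ht; rw [hBe t ht]
    have h1 : Real.exp (-(k₂ * t)) ≤ 1 := Real.exp_le_one_iff.mpr (by nlinarith)
    nlinarith
  have haTen : Tendsto a atTop (𝓝 0) :=
    Tendsto.congr' ((eventually_ge_atTop 0).mono fun t ht => (hAe t ht).symm)
      (crn_decay_tendsto k₁ a₀ hk₁)
  have hbTen : Tendsto b atTop (𝓝 0) :=
    Tendsto.congr' ((eventually_ge_atTop 0).mono fun t ht => (hBe t ht).symm)
      (crn_decay_tendsto k₂ b₀ hk₂)
  -- nonnegativity of all variables
  have hxNN : ∀ t, 0 ≤ t → 0 ≤ x t := by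
    apply crn_nonneg x (fun t => k₃ * y (max t 0)) (fun t => k₁ * a t)
      (continuous_const.mul (crn_cont_ext y hCy)) hx0
      (fun t ht => mul_nonneg hk₁.le (haNN t ht))
    intro t ht
    convert hdx t ht using 1
    rw [max_eq_left ht]
    all_goals ring
  have hyNN : ∀ t, 0 ≤ t → 0 ≤ y t := by
    apply crn_nonneg y (fun t => k₃ * x (max t 0)) (fun t => k₂ * b t)
      (continuous_const.mul (crn_cont_ext x hCx)) hy0
      (fun t ht => mul_nonneg hk₂.le (hbNN t ht))
    intro t ht
    convert hdy t ht using 1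
    rw [max_eq_left ht]
    all_goals ring
  have hcNN : ∀ t, 0 ≤ t → 0 ≤ c t := by
    apply crn_nonneg c (fun t => k₄ * z (max t 0)) (fun t => k₁ * a t + k₂ * b t)
      (continuous_const.mul (crn_cont_ext z hCz)) hc0
      (fun t ht => add_nonneg (mul_nonneg hk₁.le (haNN t ht)) (mul_nonneg hk₂.le (hbNN t ht)))
    intro t ht
    convert hdc t ht using 1
    rw [max_eq_left ht]
    all_goals ring
  have hzNN : ∀ t, 0 ≤ t → 0 ≤ z t := by
    apply crn_nonneg z (fun t => k₄ * c (max t 0)) (fun t => k₃ * x t * y t)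
      (continuous_const.mul (crn_cont_ext c hCc)) hz0
      (fun t ht => mul_nonneg (mul_nonneg hk₃.le (hxNN t ht)) (hyNN t ht))
    intro t ht
    convert hdz t ht using 1
    rw [max_eq_left ht]
    all_goals ring
  have hrNN : ∀ t, 0 ≤ t → 0 ≤ r t := by
    intro t ht
    have hmono : MonotoneOn r (Ici (0:ℝ)) :=
      crn_monoOn r (fun t => k₄ * c t * z t) hdr
        (fun t ht => mul_nonneg (mul_nonneg hk₄.le (hcNN t ht)) (hzNN t ht))
    have := hmono self_mem_Ici ht ht
    rwa [hr0] at this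
  -- conservation laws
  have hP : ∀ t, 0 ≤ t → a t + x t + z t + r t = a₀ := by
    have hd0 : ∀ t, 0 ≤ t → HasDerivAt (fun s => a s + x s + z s + r s) 0 t := by
      intro t ht
      have := (((hda t ht).add (hdx t ht)).add (hdz t ht)).add (hdr t ht)
      exact this.congr_deriv (by ring)
    intro t ht
    have h := crn_const _ hd0 t ht
    simp only [ha0, hx0, hz0, hr0] at h
    linarith [h]
  have hQ : ∀ t, 0 ≤ t → b t + y t + z t + r t = b₀ := by
    have hd0 : ∀ t, 0 ≤ t → HasDerivAt (fun s => b s + y s + z s + r s) 0 t := by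
      intro t ht
      have := (((hdb t ht).add (hdy t ht)).add (hdz t ht)).add (hdr t ht)
      exact this.congr_deriv (by ring)
    intro t ht
    have h := crn_const _ hd0 t ht
    simp only [hb0, hy0, hz0, hr0] at h
    linarith [h]
  have hS : ∀ t, 0 ≤ t → a t + b t + c t + r t = a₀ + b₀ := by
    have hd0 : ∀ t, 0 ≤ t → HasDerivAt (fun s => a s + b s + c s + r s) 0 t := by
      intro t ht
      have := (((hda t ht).add (hdb t ht)).add (hdc t ht)).add (hdr t ht)
      exact this.congr_deriv (by ring)
    intro t ht
    have h := crn_const _ hd0 t ht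
    simp only [ha0, hb0, hc0, hr0] at h
    linarith [h]
  have hW : ∀ t, 0 ≤ t → x t - y t + a t - b t = a₀ - b₀ := by
    have hd0 : ∀ t, 0 ≤ t → HasDerivAt (fun s => x s - y s + a s - b s) 0 t := by
      intro t ht
      have := (((hdx t ht).sub (hdy t ht)).add (hda t ht)).sub (hdb t ht)
      exact this.congr_deriv (by ring)
    intro t ht
    have h := crn_const _ hd0 t ht
    simp only [ha0, hb0, hx0, hy0] at h
    linarith [h]
  -- bounds
  have hxLe : ∀ t, 0 ≤ t → x t ≤ a₀ := fun t ht => by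
    linarith [hP t ht, haNN t ht, hzNN t ht, hrNN t ht]
  have hyLe : ∀ t, 0 ≤ t → y t ≤ b₀ := fun t ht => by
    linarith [hQ t ht, hbNN t ht, hzNN t ht, hrNN t ht]
  have hzLea : ∀ t, 0 ≤ t → z t ≤ a₀ := fun t ht => by
    linarith [hP t ht, haNN t ht, hxNN t ht, hrNN t ht]
  have hrLea : ∀ t, 0 ≤ t → r t ≤ a₀ := fun t ht => by
    linarith [hP t ht, haNN t ht, hxNN t ht, hzNN t ht]
  have hrLeb : ∀ t, 0 ≤ t → r t ≤ b₀ := fun t ht => by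
    linarith [hQ t ht, hbNN t ht, hyNN t ht, hzNN t ht]
  have hcLe : ∀ t, 0 ≤ t → c t ≤ a₀ + b₀ := fun t ht => by
    linarith [hS t ht, haNN t ht, hbNN t ht, hrNN t ht]
  -- Barbalat for k₃ x y
  have hmulxy : Tendsto (fun t => x t * y t) atTop (𝓝 0) := by
    obtain ⟨M₁, hM₁⟩ : ∃ M : ℝ, M = k₃*k₁*(a₀*b₀) + k₃*k₂*(a₀*b₀)
        + k₃*k₃*(a₀*(b₀*b₀)) + k₃*k₃*(a₀*(a₀*b₀)) + 1 := ⟨_, rfl⟩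
    have hM₁pos : 0 < M₁ := by
      rw [hM₁]
      have h1 : 0 ≤ k₃*k₁*(a₀*b₀) := by positivity
      have h2 : 0 ≤ k₃*k₂*(a₀*b₀) := by positivity
      have h3 : 0 ≤ k₃*k₃*(a₀*(b₀*b₀)) := by positivity
      have h4 : 0 ≤ k₃*k₃*(a₀*(a₀*b₀)) := by positivity
      linarith
    have hLip : ∀ s t, 0 ≤ s → 0 ≤ t →
        |k₃ * (x s * y s) - k₃ * (x t * y t)| ≤ M₁ * |s - t| := by
      intro s t hs ht
      have key := Convex.norm_image_sub_le_of_norm_hasDerivWithin_le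
        (f := fun u => k₃ * (x u * y u))
        (f' := fun u => k₃ * ((k₁ * a u - k₃ * x u * y u) * y u
          + x u * (k₂ * b u - k₃ * x u * y u)))
        (s := Ici (0:ℝ)) (C := M₁)
        (fun u hu => (((hdx u hu).mul (hdy u hu)).const_mul k₃).hasDerivWithinAt)
        ?_ (convex_Ici 0) ht hs
      · simpa [Real.norm_eq_abs] using key
      · intro u hu
        simp only [Real.norm_eq_abs]
        rw [abs_le]
        have hau := haNN u hu; have hbu := hbNN u hu
        have hxu := hxNN u hu; have hyu := hyNN u hu
        have haul := haLe u hu; have hbul := hbLe u hu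
        have hxul := hxLe u hu; have hyul := hyLe u hu
        have e1 : k₃ * ((k₁ * a u - k₃ * x u * y u) * y u
            + x u * (k₂ * b u - k₃ * x u * y u))
            = k₃*k₁*(a u * y u) + k₃*k₂*(x u * b u)
              - k₃*k₃*(x u * (y u * y u)) - k₃*k₃*(x u * (x u * y u)) := by ring
        have p1 : a u * y u ≤ a₀ * b₀ := mul_le_mul haul hyul hyu ha₀
        have p2 : x u * b u ≤ a₀ * b₀ := mul_le_mul hxul hbul hbu ha₀
        have p3 : x u * (y u * y u) ≤ a₀ * (b₀ * b₀) :=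
          mul_le_mul hxul (mul_le_mul hyul hyul hyu hb₀)
            (mul_nonneg hyu hyu) ha₀
        have p4 : x u * (x u * y u) ≤ a₀ * (a₀ * b₀) :=
          mul_le_mul hxul (mul_le_mul hxul hyul hyu ha₀)
            (mul_nonneg hxu hyu) ha₀
        have q1 : 0 ≤ a u * y u := mul_nonneg hau hyu
        have q2 : 0 ≤ x u * b u := mul_nonneg hxu hbu
        have q3 : 0 ≤ x u * (y u * y u) := mul_nonneg hxu (mul_nonneg hyu hyu)
        have q4 : 0 ≤ x u * (x u * y u) := mul_nonneg hxu (mul_nonneg hxu hyu)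
        have c1 : 0 ≤ k₃*k₁ := by positivity
        have c2 : 0 ≤ k₃*k₂ := by positivity
        have c3 : 0 ≤ k₃*k₃ := by positivity
        constructor
        · rw [e1, hM₁]
          linarith [mul_nonneg c1 q1, mul_nonneg c2 q2,
            mul_nonneg c3 (sub_nonneg.mpr p3), mul_nonneg c3 (sub_nonneg.mpr p4),
            mul_nonneg c1 (sub_nonneg.mpr p1), mul_nonneg c2 (sub_nonneg.mpr p2),
            mul_nonneg c3 q3, mul_nonneg c3 q4]
        · rw [e1, hM₁]
          linarith [mul_nonneg c1 q1, mul_nonneg c2 q2,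
            mul_nonneg c3 (sub_nonneg.mpr p3), mul_nonneg c3 (sub_nonneg.mpr p4),
            mul_nonneg c1 (sub_nonneg.mpr p1), mul_nonneg c2 (sub_nonneg.mpr p2),
            mul_nonneg c3 q3, mul_nonneg c3 q4]
    have hB := crn_barbalat (fun t => z t + r t) (fun t => k₃ * (x t * y t)) M₁ a₀
      hM₁pos
      (fun t ht => by
        have := (hdz t ht).add (hdr t ht)
        exact this.congr_deriv (by ring))
      (fun t ht => mul_nonneg hk₃.le (mul_nonneg (hxNN t ht) (hyNN t ht)))
      (fun t ht => by show z t + r t ≤ a₀; linarith [hP t ht, haNN t ht, hxNN t ht])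
      hLip
    have := hB.const_mul k₃⁻¹
    rw [mul_zero] at this
    refine this.congr fun t => ?_
    field_simp
  -- Barbalat for k₄ c z
  have hmulcz : Tendsto (fun t => c t * z t) atTop (𝓝 0) := by
    obtain ⟨M₂, hM₂⟩ : ∃ M : ℝ, M = k₄*k₁*(a₀*a₀) + k₄*k₂*(b₀*a₀) + k₄*k₄*((a₀+b₀)*(a₀*a₀))
        + k₄*k₃*((a₀+b₀)*(a₀*b₀)) + k₄*k₄*((a₀+b₀)*((a₀+b₀)*a₀)) + 1 := ⟨_, rfl⟩
    have hab : 0 ≤ a₀ + b₀ := by linarith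
    have hM₂pos : 0 < M₂ := by
      rw [hM₂]
      have h1 : 0 ≤ k₄*k₁*(a₀*a₀) := by positivity
      have h2 : 0 ≤ k₄*k₂*(b₀*a₀) := by positivity
      have h3 : 0 ≤ k₄*k₄*((a₀+b₀)*(a₀*a₀)) := by positivity
      have h4 : 0 ≤ k₄*k₃*((a₀+b₀)*(a₀*b₀)) := by positivity
      have h5 : 0 ≤ k₄*k₄*((a₀+b₀)*((a₀+b₀)*a₀)) := by positivity
      linarith
    have hLip : ∀ s t, 0 ≤ s → 0 ≤ t →
        |k₄ * (c s * z s) - k₄ * (c t * z t)| ≤ M₂ * |s - t| := by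
      intro s t hs ht
      have key := Convex.norm_image_sub_le_of_norm_hasDerivWithin_le
        (f := fun u => k₄ * (c u * z u))
        (f' := fun u => k₄ * ((k₁ * a u + k₂ * b u - k₄ * c u * z u) * z u
          + c u * (k₃ * x u * y u - k₄ * c u * z u)))
        (s := Ici (0:ℝ)) (C := M₂)
        (fun u hu => (((hdc u hu).mul (hdz u hu)).const_mul k₄).hasDerivWithinAt)
        ?_ (convex_Ici 0) ht hs
      · simpa [Real.norm_eq_abs] using key
      · intro u hu
        simp only [Real.norm_eq_abs]
        rw [abs_le]
        have hau := haNN u hu; have hbu := hbNN u hu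
        have hxu := hxNN u hu; have hyu := hyNN u hu
        have hcu := hcNN u hu; have hzu := hzNN u hu
        have haul := haLe u hu; have hbul := hbLe u hu
        have hxul := hxLe u hu; have hyul := hyLe u hu
        have hcul := hcLe u hu; have hzul := hzLea u hu
        have e1 : k₄ * ((k₁ * a u + k₂ * b u - k₄ * c u * z u) * z u
            + c u * (k₃ * x u * y u - k₄ * c u * z u))
            = k₄*k₁*(a u * z u) + k₄*k₂*(b u * z u) - k₄*k₄*(c u * (z u * z u))
              + k₄*k₃*(c u * (x u * y u)) - k₄*k₄*(c u * (c u * z u)) := by ring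
        have p1 : a u * z u ≤ a₀ * a₀ := mul_le_mul haul hzul hzu ha₀
        have p2 : b u * z u ≤ b₀ * a₀ := mul_le_mul hbul hzul hzu hb₀
        have p3 : c u * (z u * z u) ≤ (a₀+b₀) * (a₀*a₀) :=
          mul_le_mul hcul (mul_le_mul hzul hzul hzu ha₀) (mul_nonneg hzu hzu) hab
        have p4 : c u * (x u * y u) ≤ (a₀+b₀) * (a₀*b₀) :=
          mul_le_mul hcul (mul_le_mul hxul hyul hyu ha₀) (mul_nonneg hxu hyu) hab
        have p5 : c u * (c u * z u) ≤ (a₀+b₀) * ((a₀+b₀)*a₀) :=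
          mul_le_mul hcul (mul_le_mul hcul hzul hzu hab) (mul_nonneg hcu hzu) hab
        have q1 : 0 ≤ a u * z u := mul_nonneg hau hzu
        have q2 : 0 ≤ b u * z u := mul_nonneg hbu hzu
        have q3 : 0 ≤ c u * (z u * z u) := mul_nonneg hcu (mul_nonneg hzu hzu)
        have q4 : 0 ≤ c u * (x u * y u) := mul_nonneg hcu (mul_nonneg hxu hyu)
        have q5 : 0 ≤ c u * (c u * z u) := mul_nonneg hcu (mul_nonneg hcu hzu)
        have c1 : 0 ≤ k₄*k₁ := by positivity
        have c2 : 0 ≤ k₄*k₂ := by positivity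
        have c3 : 0 ≤ k₄*k₄ := by positivity
        have c4 : 0 ≤ k₄*k₃ := by positivity
        constructor
        · rw [e1, hM₂]
          linarith [mul_nonneg c1 q1, mul_nonneg c2 q2, mul_nonneg c3 q3,
            mul_nonneg c4 q4, mul_nonneg c3 q5,
            mul_nonneg c1 (sub_nonneg.mpr p1), mul_nonneg c2 (sub_nonneg.mpr p2),
            mul_nonneg c3 (sub_nonneg.mpr p3), mul_nonneg c4 (sub_nonneg.mpr p4),
            mul_nonneg c3 (sub_nonneg.mpr p5)]
        · rw [e1, hM₂]
          linarith [mul_nonneg c1 q1, mul_nonneg c2 q2, mul_nonneg c3 q3,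
            mul_nonneg c4 q4, mul_nonneg c3 q5,
            mul_nonneg c1 (sub_nonneg.mpr p1), mul_nonneg c2 (sub_nonneg.mpr p2),
            mul_nonneg c3 (sub_nonneg.mpr p3), mul_nonneg c4 (sub_nonneg.mpr p4),
            mul_nonneg c3 (sub_nonneg.mpr p5)]
    have hB := crn_barbalat r (fun t => k₄ * (c t * z t)) M₂ a₀
      hM₂pos
      (fun t ht => by
        convert hdr t ht using 1; ring)
      (fun t ht => mul_nonneg hk₄.le (mul_nonneg (hcNN t ht) (hzNN t ht)))
      hrLea
      hLip
    have := hB.const_mul k₄⁻¹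
    rw [mul_zero] at this
    refine this.congr fun t => ?_
    field_simp
  -- limit of x - y
  have hsubx : Tendsto (fun t => x t - y t) atTop (𝓝 (a₀ - b₀)) := by
    have h : Tendsto (fun t => a₀ - b₀ - a t + b t) atTop (𝓝 (a₀ - b₀ - 0 + 0)) :=
      (tendsto_const_nhds.sub haTen).add hbTen
    rw [sub_zero, add_zero] at h
    refine h.congr' ?_
    filter_upwards [eventually_ge_atTop (0:ℝ)] with t ht
    have := hW t ht
    linarith
  -- limits of x and y
  have hxTen : Tendsto x atTop (𝓝 (max (a₀ - b₀) 0)) :=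
    crn_lim_max x y a₀ (a₀ - b₀)
      ((eventually_ge_atTop 0).mono fun t ht => hxNN t ht)
      ((eventually_ge_atTop 0).mono fun t ht => hxLe t ht)
      ((eventually_ge_atTop 0).mono fun t ht => hyNN t ht)
      hsubx hmulxy
  have hyTen : Tendsto y atTop (𝓝 (max (b₀ - a₀) 0)) := by
    refine crn_lim_max y x b₀ (b₀ - a₀)
      ((eventually_ge_atTop 0).mono fun t ht => hyNN t ht)
      ((eventually_ge_atTop 0).mono fun t ht => hyLe t ht)
      ((eventually_ge_atTop 0).mono fun t ht => hxNN t ht)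
      ?_ (hmulxy.congr fun t => mul_comm _ _)
    have := hsubx.neg
    rw [neg_sub] at this
    exact this.congr fun t => by ring
  -- limit of z
  have hzTen : Tendsto z atTop (𝓝 0) := by
    have hm0 : 0 ≤ max a₀ b₀ := le_max_of_le_left ha₀
    rcases hm0.lt_or_eq with hm | hm
    · have habTen : Tendsto (fun t => a t + b t) atTop (𝓝 0) := by
        simpa using haTen.add hbTen
      have hev : ∀ᶠ t in atTop, a t + b t < max a₀ b₀ / 2 :=
        habTen.eventually (eventually_lt_nhds (by linarith))
      have hcge : ∀ᶠ t in atTop, max a₀ b₀ / 2 ≤ c t := by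
        filter_upwards [hev, eventually_ge_atTop (0:ℝ)] with t h1 ht
        have hS' := hS t ht
        have hr1 := hrLea t ht
        have hr2 := hrLeb t ht
        have hminmax := min_add_max a₀ b₀
        have hrmin : r t ≤ min a₀ b₀ := le_min hr1 hr2
        linarith
      have hub : ∀ᶠ t in atTop, z t ≤ 2 / max a₀ b₀ * (c t * z t) := by
        filter_upwards [hcge, eventually_ge_atTop (0:ℝ)] with t h1 ht
        have hz := hzNN t ht
        have h3 : z t * (max a₀ b₀ / 2) ≤ z t * c t := mul_le_mul_of_nonneg_left h1 hz
        rw [div_mul_eq_mul_div, le_div_iff₀ hm]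
        nlinarith
      have hlim : Tendsto (fun t => 2 / max a₀ b₀ * (c t * z t)) atTop (𝓝 0) := by
        have := hmulcz.const_mul (2 / max a₀ b₀)
        simpa using this
      exact tendsto_of_tendsto_of_tendsto_of_le_of_le' tendsto_const_nhds hlim
        ((eventually_ge_atTop 0).mono fun t ht => hzNN t ht) hub
    · have ha0' : a₀ = 0 := le_antisymm ((le_max_left a₀ b₀).trans hm.ge) ha₀
      refine Tendsto.congr' ?_ (tendsto_const_nhds (x := (0:ℝ)))
      filter_upwards [eventually_ge_atTop (0:ℝ)] with t ht
      have h1 := hzLea t ht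
      have h2 := hzNN t ht
      rw [ha0'] at h1
      linarith
  -- limit of r
  have hrTen : Tendsto r atTop (𝓝 (min a₀ b₀)) := by
    have h : Tendsto (fun t => a₀ - a t - x t - z t) atTop
        (𝓝 (a₀ - 0 - max (a₀ - b₀) 0 - 0)) :=
      ((tendsto_const_nhds.sub haTen).sub hxTen).sub hzTen
    have heq : a₀ - 0 - max (a₀ - b₀) 0 - 0 = min a₀ b₀ := by
      rcases le_total a₀ b₀ with hle | hle
      · rw [max_eq_right (by linarith), min_eq_left hle]; ring
      · rw [max_eq_left (by linarith), min_eq_right hle]; ring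
    rw [heq] at h
    refine h.congr' ?_
    filter_upwards [eventually_ge_atTop (0:ℝ)] with t ht
    have := hP t ht
    linarith
  -- limit of c
  have hcTen : Tendsto c atTop (𝓝 (max a₀ b₀)) := by
    have h : Tendsto (fun t => a₀ + b₀ - a t - b t - r t) atTop
        (𝓝 (a₀ + b₀ - 0 - 0 - min a₀ b₀)) :=
      ((tendsto_const_nhds.sub haTen).sub hbTen).sub hrTen
    have heq : a₀ + b₀ - 0 - 0 - min a₀ b₀ = max a₀ b₀ := by
      have := min_add_max a₀ b₀
      linarith
    rw [heq] at h
    refine h.congr' ?_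
    filter_upwards [eventually_ge_atTop (0:ℝ)] with t ht
    have := hS t ht
    linarith
  refine ⟨haTen, hbTen, hcTen, hrTen, ?_, ?_, hzTen⟩
  · rw [max_comm]; exact hxTen
  · rw [max_comm]; exact hyTen
end

section
/- Consider the mass-action CRN with reactions a → b, b → a, b → c with rate constants k₁, k₂, k₃ > 0, i.e., the ODE system a′ = −k₁a + k₂b, b′ = k₁a − (k₂ + k₃)b, c′ = k₃b. For any initial values a(0) = a₀ ≥ 0, b(0) = b₀ ≥ 0, c(0) = c₀ ≥ 0 and any k₁, k₂, k₃ > 0, the solution satisfies a(t) → 0, b(t) → 0 and c(t) → a₀ + b₀ + c₀ as t → ∞. In particular this CRN, which is neither loop-free (a and b form a circuit) nor fork-free (b is a reactant of two reactions), is nevertheless rate-independent on all species. -/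
open Filter Topology

/-- A function with derivative zero on `[0,∞)` is constant there. -/
lemma llcri_const_of_deriv0 {f : ℝ → ℝ} (hf : ∀ t : ℝ, 0 ≤ t → HasDerivAt f 0 t) :
    ∀ t : ℝ, 0 ≤ t → f t = f 0 := by
  intro t ht
  exact constant_of_has_deriv_right_zero (a := 0) (b := t)
    (fun x hx => (hf x hx.1).continuousAt.continuousWithinAt)
    (fun x hx => (hf x hx.1).hasDerivWithinAt) t ⟨ht, le_rfl⟩

/-- Left-eigenvector combinations evolve as pure exponentials. -/
lemma llcri_eigen {k₁ k₂ k₃ lam β : ℝ} {a b : ℝ → ℝ}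
    (hda : ∀ t : ℝ, 0 ≤ t → HasDerivAt a (-(k₁ * a t) + k₂ * b t) t)
    (hdb : ∀ t : ℝ, 0 ≤ t → HasDerivAt b (k₁ * a t - (k₂ + k₃) * b t) t)
    (h1 : k₁ * β - k₁ = lam) (h2 : k₂ - β * (k₂ + k₃) = lam * β) :
    ∀ t : ℝ, 0 ≤ t → a t + β * b t = (a 0 + β * b 0) * Real.exp (lam * t) := by
  have hdg : ∀ t : ℝ, 0 ≤ t →
      HasDerivAt (fun t => (a t + β * b t) * Real.exp (-lam * t)) 0 t := by
    intro t ht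
    have hexp : HasDerivAt (fun t : ℝ => Real.exp (-lam * t))
        (Real.exp (-lam * t) * (-lam)) t := by
      simpa using ((hasDerivAt_id t).const_mul (-lam)).exp
    have h := ((hda t ht).add ((hdb t ht).const_mul β)).mul hexp
    convert h using 1
    all_goals try rfl
    have key : (-(k₁ * a t) + k₂ * b t) + β * (k₁ * a t - (k₂ + k₃) * b t)
        = lam * (a t + β * b t) := by linear_combination (a t) * h1 + (b t) * h2
    rw [key]; simp only [Pi.add_apply]; ring
  intro t ht
  have h := llcri_const_of_deriv0 hdg t ht
  simp only [mul_zero, neg_zero, zero_mul, Real.exp_zero, mul_one] at h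
  have hne : Real.exp (lam * t) ≠ 0 := Real.exp_ne_zero _
  have : (a t + β * b t) * Real.exp (-lam * t) * Real.exp (lam * t)
      = (a 0 + β * b 0) * Real.exp (lam * t) := by rw [h]
  rwa [mul_assoc, ← Real.exp_add, neg_mul, neg_add_cancel, Real.exp_zero, mul_one] at this

lemma llcri_tendsto_exp {C lam : ℝ} (hlam : lam < 0) :
    Tendsto (fun t : ℝ => C * Real.exp (lam * t)) atTop (nhds 0) := by
  have h : Tendsto (fun t : ℝ => lam * t) atTop atBot :=
    tendsto_id.const_mul_atTop_of_neg hlam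
  simpa using (Real.tendsto_exp_atBot.comp h).const_mul C

/-- The mass-action CRN `a → b`, `b → a`, `b → c` (which is
neither loop-free nor fork-free) is nevertheless rate-independent on all
species: for any rate constants `k₁,k₂,k₃ > 0` and nonnegative initial values,
the solution satisfies `a → 0`, `b → 0` and `c → a₀ + b₀ + c₀`. -/
theorem leaky_loop_crn_rate_independent (k₁ k₂ k₃ a₀ b₀ c₀ : ℝ)
    (hk₁ : 0 < k₁) (hk₂ : 0 < k₂) (hk₃ : 0 < k₃)
    (ha₀ : 0 ≤ a₀) (hb₀ : 0 ≤ b₀) (hc₀ : 0 ≤ c₀)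
    (a b c : ℝ → ℝ)
    (ha0 : a 0 = a₀) (hb0 : b 0 = b₀) (hc0 : c 0 = c₀)
    (hda : ∀ t : ℝ, 0 ≤ t → HasDerivAt a (-(k₁ * a t) + k₂ * b t) t)
    (hdb : ∀ t : ℝ, 0 ≤ t →
      HasDerivAt b (k₁ * a t - (k₂ + k₃) * b t) t)
    (hdc : ∀ t : ℝ, 0 ≤ t → HasDerivAt c (k₃ * b t) t) :
    Tendsto a atTop (nhds 0) ∧
    Tendsto b atTop (nhds 0) ∧
    Tendsto c atTop (nhds (a₀ + b₀ + c₀)) := by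
  set S : ℝ := k₁ + k₂ + k₃ with hS
  have hSpos : 0 < S := by positivity
  have hD : 0 < S ^ 2 - 4 * k₁ * k₃ := by nlinarith [sq_nonneg (k₁ - k₃), sq_nonneg k₂]
  set q : ℝ := Real.sqrt (S ^ 2 - 4 * k₁ * k₃) with hq
  have hq2 : q ^ 2 = S ^ 2 - 4 * k₁ * k₃ := Real.sq_sqrt hD.le
  have hqpos : 0 < q := Real.sqrt_pos.2 hD
  have hqlt : q < S := by nlinarith
  set lam₁ : ℝ := (-S + q) / 2 with hlam₁
  set lam₂ : ℝ := (-S - q) / 2 with hlam₂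
  have hlam₁neg : lam₁ < 0 := by rw [hlam₁]; linarith
  have hlam₂neg : lam₂ < 0 := by rw [hlam₂]; linarith
  have hchar₁ : lam₁ ^ 2 + S * lam₁ + k₁ * k₃ = 0 := by
    rw [hlam₁]; linear_combination hq2 / 4
  have hchar₂ : lam₂ ^ 2 + S * lam₂ + k₁ * k₃ = 0 := by
    rw [hlam₂]; linear_combination hq2 / 4
  set β₁ : ℝ := (lam₁ + k₁) / k₁ with hβ₁
  set β₂ : ℝ := (lam₂ + k₁) / k₁ with hβ₂
  have hk₁ne : k₁ ≠ 0 := hk₁.ne'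
  have hprop : ∀ lam : ℝ, lam ^ 2 + S * lam + k₁ * k₃ = 0 →
      k₁ * ((lam + k₁) / k₁) - k₁ = lam ∧
      k₂ - ((lam + k₁) / k₁) * (k₂ + k₃) = lam * ((lam + k₁) / k₁) := by
    intro lam hchar
    constructor
    · field_simp
      ring
    · field_simp
      linear_combination -hchar
  obtain ⟨h11, h12⟩ := hprop lam₁ hchar₁
  obtain ⟨h21, h22⟩ := hprop lam₂ hchar₂
  have hu₁ := llcri_eigen hda hdb h11 h12
  have hu₂ := llcri_eigen hda hdb h21 h22
  have hβne : β₁ - β₂ ≠ 0 := by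
    have : β₁ - β₂ = q / k₁ := by rw [hβ₁, hβ₂, hlam₁, hlam₂]; field_simp; ring
    rw [this]
    positivity
  -- explicit formulas for b and a on [0,∞)
  set U₁ : ℝ := a 0 + β₁ * b 0 with hU₁
  set U₂ : ℝ := a 0 + β₂ * b 0 with hU₂
  have hbformula : ∀ t : ℝ, 0 ≤ t →
      b t = (U₁ * Real.exp (lam₁ * t) - U₂ * Real.exp (lam₂ * t)) / (β₁ - β₂) := by
    intro t ht
    have e₁ := hu₁ t ht
    have e₂ := hu₂ t ht
    rw [eq_div_iff hβne]
    linear_combination e₁ - e₂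
  have haformula : ∀ t : ℝ, 0 ≤ t →
      a t = (β₂ * (U₁ * Real.exp (lam₁ * t)) - β₁ * (U₂ * Real.exp (lam₂ * t)))
        / (β₂ - β₁) := by
    intro t ht
    have e₁ := hu₁ t ht
    have e₂ := hu₂ t ht
    have hβne' : β₂ - β₁ ≠ 0 := by
      intro h; apply hβne; linarith [sub_eq_zero.mp h]
    rw [eq_div_iff hβne']
    linear_combination β₂ * e₁ - β₁ * e₂
  have hbtend : Tendsto b atTop (nhds 0) := by
    have h : Tendsto (fun t : ℝ =>
        (U₁ * Real.exp (lam₁ * t) - U₂ * Real.exp (lam₂ * t)) / (β₁ - β₂))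
        atTop (nhds 0) := by
      have := ((llcri_tendsto_exp (C := U₁) hlam₁neg).sub
        (llcri_tendsto_exp (C := U₂) hlam₂neg)).div_const (β₁ - β₂)
      simpa using this
    exact h.congr' (((eventually_ge_atTop (0:ℝ)).mono fun t ht => (hbformula t ht).symm))
  have hatend : Tendsto a atTop (nhds 0) := by
    have h : Tendsto (fun t : ℝ =>
        (β₂ * (U₁ * Real.exp (lam₁ * t)) - β₁ * (U₂ * Real.exp (lam₂ * t))) / (β₂ - β₁))
        atTop (nhds 0) := by
      have := (((llcri_tendsto_exp (C := U₁) hlam₁neg).const_mul β₂).sub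
        ((llcri_tendsto_exp (C := U₂) hlam₂neg).const_mul β₁)).div_const (β₂ - β₁)
      simpa using this
    exact h.congr' (((eventually_ge_atTop (0:ℝ)).mono fun t ht => (haformula t ht).symm))
  refine ⟨hatend, hbtend, ?_⟩
  -- conservation of mass
  have hmass : ∀ t : ℝ, 0 ≤ t → a t + b t + c t = a₀ + b₀ + c₀ := by
    have hd : ∀ t : ℝ, 0 ≤ t → HasDerivAt (fun t => a t + b t + c t) 0 t := by
      intro t ht
      have h := ((hda t ht).add (hdb t ht)).add (hdc t ht)
      convert h using 1
      all_goals try rfl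
      ring
    intro t ht
    have := llcri_const_of_deriv0 hd t ht
    simpa [ha0, hb0, hc0] using this
  have hctend : Tendsto (fun t => (a₀ + b₀ + c₀) - a t - b t) atTop
      (nhds (a₀ + b₀ + c₀)) := by
    have := (tendsto_const_nhds (x := a₀ + b₀ + c₀) (f := atTop)).sub hatend |>.sub hbtend
    simpa using this
  refine hctend.congr' (((eventually_ge_atTop (0:ℝ)).mono fun t ht => ?_))
  have := hmass t ht
  linarith
end

section
/- Let C be a CRN over n species, V a P-invariant of C, and p a species with V(p) > 0. Then any nonnegative solution x of ODE(C) on [0,∞) satisfies x_p(t) ≤ (Σ_j V(j)·x_j(0)) / V(p) for all t ≥ 0: every species covered by a P-invariant is bounded along nonnegative solutions, by a bound depending only on the invariant and the initial state. -/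
open Filter Topology MeasureTheory

/-- A species covered by a P-invariant is bounded along any
nonnegative solution, by a bound depending only on the invariant and the
initial state. -/
theorem pinvariant_covered_species_bounded {n : ℕ} (C : CRN n)
    (V : Fin n → ℕ) (hV : PInvariant C V) (p : Fin n) (hp : 0 < V p)
    (x : ℝ → Fin n → ℝ) (hsol : IsSolution C x) (hnn : NonnegSol x) :
    ∀ t : ℝ, 0 ≤ t →
      x t p ≤ (∑ j : Fin n, (V j : ℝ) * x 0 j) / (V p : ℝ) := by
  intro t ht
  set L : ℝ → ℝ := fun s => ∑ j : Fin n, (V j : ℝ) * x s j with hL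
  have hderiv : ∀ s : ℝ, 0 ≤ s → HasDerivAt L 0 s := by
    intro s hs
    have h := fun j => ((hsol s hs j).const_mul ((V j : ℝ)))
    have hsum : HasDerivAt L (∑ j : Fin n, (V j : ℝ) * odeRHS C (x s) j) s :=
      HasDerivAt.fun_sum (fun j _ => h j)
    convert hsum using 1
    simp only [odeRHS, Finset.mul_sum]
    rw [Finset.sum_comm]
    symm
    apply Finset.sum_eq_zero
    intro i _
    have hr := hV.2 (C.get i) (C.get_mem i)
    have hr' : (∑ j : Fin n, (V j : ℝ) * (((C.get i).P j : ℝ) - ((C.get i).R j : ℝ))) = 0 := by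
      have := congrArg (fun z : ℤ => (z : ℝ)) hr
      push_cast at this
      simpa using this
    calc (∑ j : Fin n, (V j : ℝ) * ((((C.get i).P j : ℝ) - ((C.get i).R j : ℝ)) * (C.get i).f (x s)))
        = (∑ j : Fin n, (V j : ℝ) * (((C.get i).P j : ℝ) - ((C.get i).R j : ℝ))) * (C.get i).f (x s) := by
          rw [Finset.sum_mul]; congr 1; ext j; ring
      _ = 0 := by rw [hr']; ring
  have hconst : L t = L 0 := by
    rcases eq_or_lt_of_le ht with h | h
    · rw [← h]
    · have := constant_of_has_deriv_right_zero (f := L) (a := 0) (b := t)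
        (fun s hs => (hderiv s hs.1).continuousAt.continuousWithinAt)
        (fun s hs => (hderiv s hs.1).hasDerivWithinAt)
      exact this t (Set.mem_Icc.mpr ⟨ht, le_refl t⟩)
  have hp' : (0 : ℝ) < (V p : ℝ) := by exact_mod_cast hp
  rw [le_div_iff₀ hp']
  have hle : x t p * (V p : ℝ) ≤ L t := by
    rw [mul_comm]
    exact Finset.single_le_sum (f := fun j => (V j : ℝ) * x t j)
      (fun j _ => mul_nonneg (Nat.cast_nonneg _) (hnn t ht j)) (Finset.mem_univ p)
  calc x t p * (V p : ℝ) ≤ L t := hle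
    _ = L 0 := hconst
    _ = _ := rfl
end

section
/- Let C be a CRN over n species whose rate functions fᵢ are nonnegative, let p be an output species of C, and suppose p is covered by some P-invariant V (V(p) > 0). Then along any nonnegative solution x of ODE(C) on [0,∞), the function t ↦ x_p(t) is nondecreasing and bounded above, and hence converges to a finite limit as t → ∞. -/
open Filter Topology MeasureTheory

/-- An output species covered by a P-invariant, in a CRN with
nonnegative rate functions, is nondecreasing and bounded above along any
nonnegative solution, hence converges to a finite limit. -/
theorem output_species_monotone_bounded_converges {n : ℕ} (C : CRN n)
    (hrates : ∀ r ∈ C, ∀ y : Fin n → ℝ, 0 ≤ r.f y)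
    (p : Fin n) (hout : OutputSpecies C p)
    (V : Fin n → ℕ) (hV : PInvariant C V) (hp : 0 < V p)
    (x : ℝ → Fin n → ℝ) (hsol : IsSolution C x) (hnn : NonnegSol x) :
    MonotoneOn (fun t => x t p) (Set.Ici (0 : ℝ)) ∧
    BddAbove ((fun t => x t p) '' Set.Ici (0 : ℝ)) ∧
    ∃ L : ℝ, Filter.Tendsto (fun t => x t p) Filter.atTop (nhds L) := by
  have hmem : ∀ i : Fin C.length, C.get i ∈ C := fun i => C.get_mem i
  have hrhs_nonneg : ∀ y : Fin n → ℝ, 0 ≤ odeRHS C y p := by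
    intro y
    apply Finset.sum_nonneg
    intro i _
    refine mul_nonneg ?_ (hrates _ (hmem i) y)
    have h1 := hout _ (hmem i)
    have : ((C.get i).R p : ℝ) ≤ ((C.get i).P p : ℝ) := by exact_mod_cast h1
    linarith
  -- Monotonicity
  have hmono : MonotoneOn (fun t => x t p) (Set.Ici 0) := by
    apply monotoneOn_of_deriv_nonneg (convex_Ici 0)
    · intro t ht
      exact ((hsol t ht p).continuousAt).continuousWithinAt
    · intro t ht
      rw [interior_Ici] at ht
      exact ((hsol t ht.le p).differentiableAt).differentiableWithinAt
    · intro t ht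
      rw [interior_Ici] at ht
      rw [(hsol t ht.le p).deriv]
      exact hrhs_nonneg _
  -- The linear invariant g is constant on [0, ∞)
  set g : ℝ → ℝ := fun t => ∑ j, (V j : ℝ) * x t j with hg
  have hgderiv : ∀ t, 0 ≤ t → HasDerivAt g 0 t := by
    intro t ht
    have h1 : HasDerivAt g (∑ j, (V j : ℝ) * odeRHS C (x t) j) t :=
      HasDerivAt.fun_sum fun j _ => (hsol t ht j).const_mul _
    have h2 : (∑ j, (V j : ℝ) * odeRHS C (x t) j) = 0 := by
      unfold odeRHS
      simp_rw [Finset.mul_sum]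
      rw [Finset.sum_comm]
      apply Finset.sum_eq_zero
      intro i _
      have hz := hV.2 _ (hmem i)
      have hz' : (∑ j, (V j : ℝ) * (((C.get i).P j : ℝ) - ((C.get i).R j : ℝ))) = 0 := by
        exact_mod_cast hz
      have hre : ∀ j : Fin n, (V j : ℝ) *
          ((((C.get i).P j : ℝ) - ((C.get i).R j : ℝ)) * (C.get i).f (x t))
          = ((V j : ℝ) * (((C.get i).P j : ℝ) - ((C.get i).R j : ℝ))) * (C.get i).f (x t) :=
        fun j => by ring
      simp_rw [hre]
      rw [← Finset.sum_mul, hz', zero_mul]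
    rwa [h2] at h1
  have hgconst : ∀ t, 0 ≤ t → g t = g 0 := by
    intro t ht
    have := constant_of_has_deriv_right_zero (f := g) (a := 0) (b := t)
      (fun s hs => ((hgderiv s hs.1).continuousAt).continuousWithinAt)
      (fun s hs => (hgderiv s hs.1).hasDerivWithinAt)
    exact this t (Set.mem_Icc.mpr ⟨ht, le_rfl⟩)
  -- Bound: x t p ≤ g 0 / V p
  have hbound : ∀ t, 0 ≤ t → x t p ≤ g 0 / (V p : ℝ) := by
    intro t ht
    have h1 : (V p : ℝ) * x t p ≤ g t :=
      Finset.single_le_sum (f := fun j => (V j : ℝ) * x t j)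
        (fun j _ => mul_nonneg (Nat.cast_nonneg _) (hnn t ht j)) (Finset.mem_univ p)
    rw [hgconst t ht] at h1
    have hVp : (0 : ℝ) < (V p : ℝ) := by exact_mod_cast hp
    rw [le_div_iff₀ hVp]
    linarith
  have hbdd : BddAbove ((fun t => x t p) '' Set.Ici (0 : ℝ)) := by
    refine ⟨g 0 / (V p : ℝ), ?_⟩
    rintro y ⟨t, ht, rfl⟩
    exact hbound t ht
  refine ⟨hmono, hbdd, ?_⟩
  -- Convergence via the truncated function
  set F : ℝ → ℝ := fun t => x (max t 0) p with hF
  have hFmono : Monotone F := by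
    intro a b hab
    exact hmono (le_max_right a 0) (le_max_right b 0) (max_le_max hab le_rfl)
  have hFbdd : BddAbove (Set.range F) := by
    refine ⟨g 0 / (V p : ℝ), ?_⟩
    rintro y ⟨t, rfl⟩
    exact hbound _ (le_max_right t 0)
  have hFt : Filter.Tendsto F Filter.atTop (nhds (⨆ t, F t)) :=
    tendsto_atTop_ciSup hFmono hFbdd
  refine ⟨⨆ t, F t, hFt.congr' ?_⟩
  filter_upwards [Filter.eventually_ge_atTop (0 : ℝ)] with t ht
  simp [hF, max_eq_left ht]
end

section
/- Let C be a CRN over n species, S a siphon of C that contains the support of some P-invariant V, and x a nonnegative solution of ODE(C) on [0,∞) with Σ_j V(j)·x_j(0) > 0. Then for every t ≥ 0 there exists a species j ∈ S with x_j(t) > 0: a non-critical siphon with positive conserved initial mass can never become completely empty. -/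
open Filter Topology MeasureTheory

/-- A siphon containing the support of a P-invariant, with
positive conserved initial mass, can never become completely empty along a
nonnegative solution. -/
theorem noncritical_siphon_never_empty {n : ℕ} (C : CRN n)
    (S : Set (Fin n)) (hS : Siphon C S)
    (V : Fin n → ℕ) (hV : PInvariant C V) (hsupp : {j | 0 < V j} ⊆ S)
    (x : ℝ → Fin n → ℝ) (hsol : IsSolution C x) (hnn : NonnegSol x)
    (hpos : 0 < ∑ j : Fin n, (V j : ℝ) * x 0 j) :
    ∀ t : ℝ, 0 ≤ t → ∃ j ∈ S, 0 < x t j := by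
  intro t ht
  set g : ℝ → ℝ := fun s => ∑ j : Fin n, (V j : ℝ) * x s j with hg
  have hderiv : ∀ s : ℝ, 0 ≤ s → HasDerivAt g 0 s := by
    intro s hs
    have h1 : HasDerivAt g (∑ j : Fin n, (V j : ℝ) * odeRHS C (x s) j) s := by
      apply HasDerivAt.fun_sum
      intro j _
      exact (hsol s hs j).const_mul _
    have h2 : (∑ j : Fin n, (V j : ℝ) * odeRHS C (x s) j) = 0 := by
      unfold odeRHS
      simp only [Finset.mul_sum]
      rw [Finset.sum_comm]
      apply Finset.sum_eq_zero
      intro i _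
      have hmem : C.get i ∈ C := C.get_mem i
      have := hV.2 (C.get i) hmem
      have hr : (∑ j : Fin n, (V j : ℝ) * (((C.get i).P j : ℝ) - ((C.get i).R j : ℝ))) = 0 := by
        exact_mod_cast congrArg (fun z : ℤ => (z : ℝ)) this
      calc (∑ j : Fin n, (V j : ℝ) * ((((C.get i).P j : ℝ) - ((C.get i).R j : ℝ)) * (C.get i).f (x s)))
          = (∑ j : Fin n, (V j : ℝ) * (((C.get i).P j : ℝ) - ((C.get i).R j : ℝ))) * (C.get i).f (x s) := by
            rw [Finset.sum_mul]; congr 1; ext j; ring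
        _ = 0 := by rw [hr, zero_mul]
    rwa [h2] at h1
  have hconst : g t = g 0 := by
    have hcont : ContinuousOn g (Set.Icc 0 t) := fun s hs =>
      ((hderiv s hs.1).continuousAt).continuousWithinAt
    have hd : ∀ s ∈ Set.Ico (0:ℝ) t, HasDerivWithinAt g 0 (Set.Ici s) s := fun s hs =>
      (hderiv s hs.1).hasDerivWithinAt
    exact constant_of_has_deriv_right_zero hcont hd t (Set.right_mem_Icc.2 ht)
  have hgt : 0 < g t := hconst ▸ hpos
  have : ∃ j : Fin n, 0 < (V j : ℝ) * x t j := by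
    by_contra h
    push_neg at h
    have : g t ≤ 0 := Finset.sum_nonpos (fun j _ => h j)
    linarith
  obtain ⟨j, hj⟩ := this
  have hVj : 0 < V j := by
    by_contra h
    push_neg at h
    interval_cases hv : V j <;> simp_all
  refine ⟨j, hsupp hVj, ?_⟩
  have := hnn t ht j
  nlinarith [hj]
end
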